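/- arXiv:1612.05946 — 12 statements merged into one kernel-verified Lean document; each statement's English description precedes it below -/
import Mathlib

section
/- Let 1 ≤ r ≤ a and 1 ≤ s < v ≤ u ≤ b be indices such that: k_r > l_s; if s > 1 then l_{s−1} > k_r; if r < a then l_u > k_{r+1} and moreover u = b or k_{r+1} > l_{u+1}; if r = a then u = b. Assume that l_s, l_{s+1}, …, l_{v−1} all belong to I and that l_v belongs to J. Then inv(i_1, …, i_l, k_1, …, k_{r−1}, l_v, k_{r+1}, …, k_a) = inv(i_1, …, i_l, k_1, …, k_a) − (v − s). -/
/-- The number of inversions of a finite sequence `c` of natural numbers: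
the number of pairs of positions `(p, q)` with `p < q` and `c p < c q`.
This is the minimal number of transpositions of neighbouring entries needed
to bring the sequence into strictly decreasing order. -/
def numInv {N : ℕ} (c : Fin N → ℕ) : ℕ :=
  (Finset.univ.filter (fun pq : Fin N × Fin N => pq.1 < pq.2 ∧ c pq.1 < c pq.2)).card

/-!
Only the inversions involving the position of `k_r` change. Every entry after it is some `k_j`
with `j > r`, which lies below both `k_r` and `l_v`; every `k_j` before it lies above both. So the
drop is the number of `i`'s strictly between `l_v` and `k_r`, and the hypotheses on `s`, `v` say
that these are exactly `l_s, …, l_{v-1}`.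
-/

open Finset Function

section Inversions

variable {N : ℕ}

def numInvAt (c : Fin N → ℕ) (p : Fin N) : ℕ :=
  #{q | q < p ∧ c q < c p} + #{q | p < q ∧ c p < c q}

lemma numInv_eq_sum_compl_add_numInvAt (c : Fin N → ℕ) (p : Fin N) :
    numInv c = (∑ a ∈ {p}ᶜ, ∑ b ∈ {p}ᶜ, if a < b ∧ c a < c b then 1 else 0)
      + numInvAt c p := by
  set f : Fin N → Fin N → ℕ := fun a b => if a < b ∧ c a < c b then 1 else 0
  have hleft : ∑ a ∈ {p}ᶜ, f a p = #{q | q < p ∧ c q < c p} := by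
    rw [card_filter, Fintype.sum_eq_add_sum_compl p]
    simp [f]
  have hright : ∑ b, f p b = #{q | p < q ∧ c p < c q} := (card_filter _ _).symm
  calc numInv c = ∑ a, ∑ b, f a b := by rw [numInv, card_filter, Fintype.sum_prod_type]
    _ = ∑ b, f p b + ∑ a ∈ {p}ᶜ, (f a p + ∑ b ∈ {p}ᶜ, f a b) := by
      simp only [Fintype.sum_eq_add_sum_compl p (f _)]
      rw [Fintype.sum_eq_add_sum_compl p]
    _ = _ := by rw [sum_add_distrib, hleft, hright, numInvAt]; ring

lemma numInv_update_add_numInvAt (c : Fin N → ℕ) (p : Fin N) (x : ℕ) :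
    numInv (update c p x) + numInvAt c p = numInv c + numInvAt (update c p x) p := by
  rw [numInv_eq_sum_compl_add_numInvAt c p, numInv_eq_sum_compl_add_numInvAt (update c p x) p]
  have hsame : ∀ a ∈ ({p}ᶜ : Finset (Fin N)), update c p x a = c a := fun a ha =>
    update_of_ne (by simpa using ha) _ _
  rw [sum_congr rfl fun a ha => sum_congr rfl fun b hb => by rw [hsame a ha, hsame b hb]]
  ring

end Inversions

lemma Fin.castAdd_lt_natAdd {l a : ℕ} (m : Fin l) (r : Fin a) :
    Fin.castAdd a m < Fin.natAdd l r :=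
  show (m : ℕ) < l + r by omega

lemma append_update_right {l a : ℕ} {α : Type*} (i : Fin l → α) (k : Fin a → α) (r : Fin a)
    (x : α) : Fin.append i (update k r x) = update (Fin.append i k) (Fin.natAdd l r) x := by
  ext p
  refine Fin.addCases (fun m => ?_) (fun j => ?_) p
  · simp [(Fin.castAdd_lt_natAdd m r).ne]
  · simp [update_apply]

lemma StrictAnti.update_of_between {ι α : Type*} [Preorder ι] [DecidableEq ι] [Preorder α]
    {k : ι → α} (hk : StrictAnti k) {r : ι} {y : α}
    (hlt : ∀ j, j < r → y < k j) (hgt : ∀ j, r < j → k j < y) :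
    StrictAnti (update k r y) := by
  intro j j' hjj'
  rcases eq_or_ne j r with rfl | hj
  · simpa [hjj'.ne'] using hgt j' hjj'
  rcases eq_or_ne j' r with rfl | hj'
  · simpa [hj] using hlt j hjj'
  simpa [hj, hj'] using hk hjj'

lemma numInvAt_append_natAdd {l a : ℕ} (i : Fin l → ℕ) {k : Fin a → ℕ} (hk : StrictAnti k)
    (r : Fin a) : numInvAt (Fin.append i k) (Fin.natAdd l r) = #{m | i m < k r} := by
  have hright :
      #{q | Fin.natAdd l r < q ∧ Fin.append i k (Fin.natAdd l r) < Fin.append i k q} = 0 := by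
    rw [card_eq_zero, filter_eq_empty_iff]
    intro q _
    refine Fin.addCases (fun m => ?_) (fun j => ?_) q
    · exact fun h => (Fin.castAdd_lt_natAdd m r).asymm h.1
    · simpa using fun hrj => (hk hrj).le
  have hbefore : ∀ j, ¬ (j < r ∧ k j < k r) := fun j h => (hk h.1).not_gt h.2
  rw [numInvAt, hright, add_zero, card_filter, card_filter, Fin.sum_univ_add]
  simp [Fin.castAdd_lt_natAdd, hbefore]

lemma card_filter_lt_eq_card_filter_lt_add {α β : Type*} [LinearOrder β] (s : Finset α)
    (f : α → β) {y z : β} (hyz : y < z) (hy : ∀ a ∈ s, f a ≠ y) :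
    #{a ∈ s | f a < z} = #{a ∈ s | f a < y} + #{a ∈ s | y < f a ∧ f a < z} := by
  classical
  rw [← card_union_of_disjoint (disjoint_filter.2 fun a _ h1 h2 => lt_asymm h1 h2.1)]
  congr 1
  ext a
  have := hy a
  simp only [mem_filter, mem_union]
  grind

lemma filter_between_eq_image_Ico {α : Type*} [LinearOrder α] {b : ℕ} {lv : Fin b → α}
    (hlv : StrictAnti lv) {I : Finset α} (hI : I ⊆ univ.image lv) {s v : Fin b} {z : α}
    (hsz : lv s < z) (hpred : ∀ s' : Fin b, (s' : ℕ) + 1 = s → z < lv s')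
    (hmem : ∀ m, s ≤ m → m < v → lv m ∈ I) :
    {x ∈ I | lv v < x ∧ x < z} = (Ico s v).image lv := by
  ext x
  simp only [mem_filter, mem_image, mem_Ico]
  constructor
  · rintro ⟨hx, hvx, hxz⟩
    obtain ⟨m, -, rfl⟩ := mem_image.1 (hI hx)
    refine ⟨m, ⟨?_, hlv.lt_iff_gt.1 hvx⟩, rfl⟩
    by_contra! hms
    have hms : (m : ℕ) < s := hms
    let s' : Fin b := ⟨s - 1, by omega⟩
    have hle : lv s' ≤ lv m := hlv.antitone (show (m : ℕ) ≤ s - 1 by omega)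
    exact (hpred s' (show (s : ℕ) - 1 + 1 = s by omega)).not_ge (hle.trans hxz.le)
  · rintro ⟨m, ⟨hsm, hmv⟩, rfl⟩
    exact ⟨hmem m hsm hmv, hlv hmv, (hlv.antitone hsm).trans_lt hsz⟩

theorem inversions_replace_drop_general
    (l a b : ℕ) (I J : Finset ℕ) (hdisj : Disjoint I J)
    (i : Fin l → ℕ) (hi : StrictAnti i) (hiI : Finset.image i Finset.univ = I)
    (k : Fin a → ℕ) (hk : StrictAnti k) (hkJ : ∀ r, k r ∈ J)
    (lv : Fin b → ℕ) (hlv : StrictAnti lv)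
    (hlvIJ : Finset.image lv Finset.univ = (I ∪ J) \ Finset.image k Finset.univ)
    (r : Fin a) (s v u : Fin b)
    (hsv : s < v) (hvu : v ≤ u)
    -- `k_r > l_s`
    (h1 : k r > lv s)
    -- if `s > 1` then `l_{s-1} > k_r`
    (h2 : ∀ s' : Fin b, (s' : ℕ) + 1 = (s : ℕ) → lv s' > k r)
    -- if `r < a` then `l_u > k_{r+1}` and moreover `u = b` or `k_{r+1} > l_{u+1}`
    (h3 : ∀ r' : Fin a, (r' : ℕ) = (r : ℕ) + 1 →
        lv u > k r' ∧ ((u : ℕ) + 1 = b ∨ ∀ u' : Fin b, (u' : ℕ) = (u : ℕ) + 1 → k r' > lv u'))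
    -- `l_s, l_{s+1}, …, l_{v-1}` all belong to `I`
    (h5 : ∀ m : Fin b, s ≤ m → m < v → lv m ∈ I)
    -- `l_v` belongs to `J`
    (h6 : lv v ∈ J) :
    numInv (Fin.append i (Function.update k r (lv v))) + ((v : ℕ) - (s : ℕ))
      = numInv (Fin.append i k) := by
  have hvr : lv v < k r := (hlv hsv).trans h1
  have hanti : StrictAnti (update k r (lv v)) := by
    refine hk.update_of_between (fun j hj => hvr.trans (hk hj)) fun j hj => ?_
    let r' : Fin a := ⟨r + 1, (show (r : ℕ) + 1 ≤ j from hj).trans_lt j.isLt⟩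
    calc k j ≤ k r' := hk.antitone (show (r : ℕ) + 1 ≤ j from hj)
      _ < lv u := (h3 r' rfl).1
      _ ≤ lv v := hlv.antitone hvu
  have hIlv : I ⊆ univ.image lv := fun x hx => by
    rw [hlvIJ, mem_sdiff, mem_image]
    exact ⟨mem_union_left _ hx, fun ⟨j, _, hj⟩ => disjoint_left.1 hdisj hx (hj ▸ hkJ j)⟩
  have hne : ∀ m ∈ univ, i m ≠ lv v := fun m _ hm =>
    disjoint_left.1 hdisj (hiI ▸ mem_image_of_mem i (mem_univ m)) (hm ▸ h6)
  have hbetween : #{m | lv v < i m ∧ i m < k r} = v - s := by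
    rw [← card_image_of_injective _ hi.injective,
      ← filter_image (p := fun x => lv v < x ∧ x < k r), hiI,
      filter_between_eq_image_Ico hlv hIlv h1 h2 h5, card_image_of_injective _ hlv.injective,
      Fin.card_Ico]
  have key := numInv_update_add_numInvAt (Fin.append i k) (Fin.natAdd l r) (lv v)
  rw [← append_update_right, numInvAt_append_natAdd i hk, numInvAt_append_natAdd i hanti,
    update_self, card_filter_lt_eq_card_filter_lt_add _ _ hvr hne, hbetween] at key
  omega

/-- Proposition 2.4 of the paper: if `l_s, …, l_{v-1} ∈ I` and `l_v ∈ J`, then replacing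
`k_r` by `l_v` in the list `(i_1, …, i_l, k_1, …, k_a)` decreases the number of
inversions by exactly `v - s`. -/
theorem inversions_replace_drop
    (l a b : ℕ) (I J : Finset ℕ) (hdisj : Disjoint I J) (hIcard : I.card = l)
    (i : Fin l → ℕ) (hi : StrictAnti i) (hiI : Finset.image i Finset.univ = I)
    (ha : 1 ≤ a)
    (k : Fin a → ℕ) (hk : StrictAnti k) (hkJ : ∀ r, k r ∈ J)
    (lv : Fin b → ℕ) (hlv : StrictAnti lv)
    (hlvIJ : Finset.image lv Finset.univ = (I ∪ J) \ Finset.image k Finset.univ)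
    (r : Fin a) (s v u : Fin b)
    (hsv : s < v) (hvu : v ≤ u)
    -- `k_r > l_s`
    (h1 : k r > lv s)
    -- if `s > 1` then `l_{s-1} > k_r`
    (h2 : ∀ s' : Fin b, (s' : ℕ) + 1 = (s : ℕ) → lv s' > k r)
    -- if `r < a` then `l_u > k_{r+1}` and moreover `u = b` or `k_{r+1} > l_{u+1}`
    (h3 : ∀ r' : Fin a, (r' : ℕ) = (r : ℕ) + 1 →
        lv u > k r' ∧ ((u : ℕ) + 1 = b ∨ ∀ u' : Fin b, (u' : ℕ) = (u : ℕ) + 1 → k r' > lv u'))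
    -- if `r = a` then `u = b`
    (h4 : (r : ℕ) + 1 = a → (u : ℕ) + 1 = b)
    -- `l_s, l_{s+1}, …, l_{v-1}` all belong to `I`
    (h5 : ∀ m : Fin b, s ≤ m → m < v → lv m ∈ I)
    -- `l_v` belongs to `J`
    (h6 : lv v ∈ J) :
    numInv (Fin.append i (Function.update k r (lv v))) + ((v : ℕ) - (s : ℕ))
      = numInv (Fin.append i k) :=
  inversions_replace_drop_general l a b I J hdisj i hi hiI k hk hkJ lv hlv hlvIJ r s v u hsv hvu h1
    h2 h3 h5 h6
end

section
/- Let i ≥ 1, let a, a' ∈ M(p,q) satisfy d0(a) = 0 and a' − a = d0(b) for some b ∈ M(p,q−1), and let (a_0, …, a_{2i−1}) and (a'_0, …, a'_{2i−1}) be d_i-sequences starting at a and at a' respectively. Assume the double complex is d0-exact at each of the columns p+1, p+2, …, p+i−1. Then a'_{2i−1} − a_{2i−1} lies in the image of d0 : M(p+i, q−i) → M(p+i, q−i+1). -/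
/-- The double complex (given by a family of submodules `M p q` of an ambient module `V`,
with anticommuting differentials `d0`, `d1`) is `d0`-exact at column `p'`: every `d0`-cycle
in `M p' q'` is a `d0`-boundary of an element of `M p' (q'-1)`. -/
def D0Exact {R V : Type*} [Ring R] [AddCommGroup V] [Module R V]
    (M : ℤ → ℤ → Submodule R V) (d0 : V →ₗ[R] V) (p' : ℤ) : Prop :=
  ∀ q' : ℤ, ∀ x ∈ M p' q', d0 x = 0 → ∃ y ∈ M p' (q' - 1), d0 y = x

/-- A `d_i`-sequence `(a_0, a_1, …, a_{2i-1})` starting at `a ∈ M p q`, encoded by its even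
part `ae` (with `a_{2m} = ae m ∈ M (p+m) (q-m)`) and its odd part `ao`
(with `a_{2m+1} = ao m ∈ M (p+m+1) (q-m)`), satisfying `a_0 = a`,
`d1 (a_{2m}) = a_{2m+1}` for `0 ≤ m ≤ i-1` and `d0 (a_{2m+2}) = a_{2m+1}` for `0 ≤ m ≤ i-2`. -/
def IsDSeq {R V : Type*} [Ring R] [AddCommGroup V] [Module R V]
    (M : ℤ → ℤ → Submodule R V) (d0 d1 : V →ₗ[R] V)
    (p q : ℤ) (i : ℕ) (a : V) (ae ao : ℕ → V) : Prop :=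
  ae 0 = a ∧
  (∀ m : ℕ, m < i → ae m ∈ M (p + m) (q - m)) ∧
  (∀ m : ℕ, m < i → ao m ∈ M (p + m + 1) (q - m)) ∧
  (∀ m : ℕ, m < i → d1 (ae m) = ao m) ∧
  (∀ m : ℕ, m + 1 < i → d0 (ae (m + 1)) = ao m)

/-- Lemma 3.1 of the paper: if `a` and `a'` are `d0`-cycles in `M p q` differing by a
`d0`-boundary, then the last terms of `d_i`-sequences starting at `a` and `a'` differ by an
element of the image of `d0 : M (p+i) (q-i) → M (p+i) (q-i+1)`. -/
theorem dseq_last_terms_differ_by_boundary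
    {R V : Type*} [Ring R] [AddCommGroup V] [Module R V]
    (M : ℤ → ℤ → Submodule R V) (d0 d1 : V →ₗ[R] V)
    (hm0 : ∀ p q : ℤ, ∀ x ∈ M p q, d0 x ∈ M p (q + 1))
    (hm1 : ∀ p q : ℤ, ∀ x ∈ M p q, d1 x ∈ M (p + 1) q)
    (h00 : ∀ x : V, d0 (d0 x) = 0)
    (h11 : ∀ x : V, d1 (d1 x) = 0)
    (h01 : ∀ x : V, d0 (d1 x) + d1 (d0 x) = 0)
    (p q : ℤ) (i : ℕ) (hi : 1 ≤ i)
    (a a' b : V) (ha : a ∈ M p q) (ha' : a' ∈ M p q)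
    (hda : d0 a = 0) (hb : b ∈ M p (q - 1)) (hab : a' - a = d0 b)
    (ae ao ae' ao' : ℕ → V)
    (hseq : IsDSeq M d0 d1 p q i a ae ao)
    (hseq' : IsDSeq M d0 d1 p q i a' ae' ao')
    (hexact : ∀ m : ℕ, 1 ≤ m → m < i → D0Exact M d0 (p + m)) :
    ∃ y ∈ M (p + i) (q - i), d0 y = ao' (i - 1) - ao (i - 1) := by
  obtain ⟨he0, heM, hoM, hd1s, hd0s⟩ := hseq
  obtain ⟨he0', heM', hoM', hd1s', hd0s'⟩ := hseq'
  have key : ∀ m : ℕ, m < i → ∃ c ∈ M (p + m) (q - m - 1),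
      ao' m - ao m = d0 (-(d1 c)) := by
    intro m
    induction m with
    | zero =>
      intro h
      refine ⟨b, by simpa using hb, ?_⟩
      have h1 : ao' 0 - ao 0 = d1 (d0 b) := by
        rw [← hd1s 0 h, ← hd1s' 0 h, ← map_sub, he0, he0', hab]
      rw [h1, map_neg, eq_neg_iff_add_eq_zero, add_comm]
      exact h01 b
    | succ m ih =>
      intro h
      obtain ⟨c, hcM, hc⟩ := ih (by omega)
      have hm1c : d1 c ∈ M (p + m + 1) (q - m - 1) := hm1 _ _ _ hcM
      have hxM : ae' (m+1) - ae (m+1) + d1 c ∈ M (p + (m+1) : ℤ) (q - (m+1) : ℤ) := by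
        have h1 := heM (m+1) h
        have h2 := heM' (m+1) h
        push_cast at h1 h2 ⊢
        have e1 : q - ((m : ℤ) + 1) = q - m - 1 := by ring
        rw [e1] at h1 h2 ⊢
        exact add_mem (sub_mem h2 h1) (by convert hm1c using 2 <;> ring)
      have hx0 : d0 (ae' (m+1) - ae (m+1) + d1 c) = 0 := by
        rw [map_add, map_sub, hd0s m h, hd0s' m h, hc, map_neg]
        abel
      obtain ⟨y, hyM, hy⟩ := hexact (m+1) (by omega) h _ _ hxM hx0
      have heq : ae' (m+1) - ae (m+1) = d0 y - d1 c := by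
        rw [hy]; abel
      refine ⟨y, ?_, ?_⟩
      · convert hyM using 2 <;> push_cast <;> ring
      · have h2 : ao' (m+1) - ao (m+1) = d1 (ae' (m+1) - ae (m+1)) := by
          rw [map_sub, hd1s (m+1) h, hd1s' (m+1) h]
        rw [h2, heq, map_sub, h11, sub_zero, map_neg, eq_neg_iff_add_eq_zero,
          add_comm]
        exact h01 y
  obtain ⟨j, rfl⟩ : ∃ j, i = j + 1 := ⟨i - 1, by omega⟩
  obtain ⟨c, hcM, hc⟩ := key j (by omega)
  refine ⟨-(d1 c), ?_, ?_⟩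
  · have := hm1 _ _ _ hcM
    have h1 : -(d1 c) ∈ M (p + j + 1) (q - j - 1) := neg_mem this
    convert h1 using 2 <;> push_cast <;> ring
  · simpa using hc.symm
end

section
/- Let i ≥ 1, let a, a' ∈ M(p,q) satisfy d0(a) = 0 and a' − a = d0(b_0) for some b_0 ∈ M(p,q−1), and let (a_0, …, a_{2i−1}) and (a'_0, …, a'_{2i−1}) be d_i-sequences starting at a and at a' respectively. Assume the double complex is d0-exact at each of the columns p+1, p+2, …, p+i−1. Then for every k with 1 ≤ k ≤ i there exists an element b_{2k−1} ∈ M(p+k, q−k) lying in the image of d1 : M(p+k−1, q−k) → M(p+k, q−k) such that a'_{2k−1} = a_{2k−1} + d0(b_{2k−1}). -/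
/-- The inductive claim in the proof of Lemma 3.1 of the paper: if `a` and `a'` are
`d0`-cycles in `M p q` differing by the `d0`-boundary of `b₀ ∈ M (p, q-1)`, then for every
`1 ≤ k ≤ i` the terms `a_{2k-1}` and `a'_{2k-1}` of `d_i`-sequences starting at `a` and `a'`
satisfy `a'_{2k-1} = a_{2k-1} + d0 (b_{2k-1})` for some `b_{2k-1} ∈ M (p+k) (q-k)` lying in
the image of `d1 : M (p+k-1) (q-k) → M (p+k) (q-k)`. -/
theorem dseq_terms_differ_by_boundary
    {R V : Type*} [Ring R] [AddCommGroup V] [Module R V]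
    (M : ℤ → ℤ → Submodule R V) (d0 d1 : V →ₗ[R] V)
    (hm0 : ∀ p q : ℤ, ∀ x ∈ M p q, d0 x ∈ M p (q + 1))
    (hm1 : ∀ p q : ℤ, ∀ x ∈ M p q, d1 x ∈ M (p + 1) q)
    (h00 : ∀ x : V, d0 (d0 x) = 0)
    (h11 : ∀ x : V, d1 (d1 x) = 0)
    (h01 : ∀ x : V, d0 (d1 x) + d1 (d0 x) = 0)
    (p q : ℤ) (i : ℕ) (hi : 1 ≤ i)
    (a a' b₀ : V) (ha : a ∈ M p q) (ha' : a' ∈ M p q)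
    (hda : d0 a = 0) (hb₀ : b₀ ∈ M p (q - 1)) (hab : a' - a = d0 b₀)
    (ae ao ae' ao' : ℕ → V)
    (hseq : IsDSeq M d0 d1 p q i a ae ao)
    (hseq' : IsDSeq M d0 d1 p q i a' ae' ao')
    (hexact : ∀ m : ℕ, 1 ≤ m → m < i → D0Exact M d0 (p + m)) :
    ∀ k : ℕ, 1 ≤ k → k ≤ i →
      ∃ bk : V, bk ∈ M (p + k) (q - k) ∧
        (∃ c ∈ M (p + k - 1) (q - k), d1 c = bk) ∧
        ao' (k - 1) = ao (k - 1) + d0 bk := by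

  obtain ⟨hae0, haeM, haoM, hd1e, hd0e⟩ := hseq
  obtain ⟨hae0', haeM', haoM', hd1e', hd0e'⟩ := hseq'
  intro k
  induction k with
  | zero => intro h; omega
  | succ n ih =>
    intro _ hki
    rcases Nat.eq_zero_or_pos n with hn | hn
    · subst hn
      refine ⟨d1 (-b₀), ?_, ⟨-b₀, ?_, rfl⟩, ?_⟩
      · have h := hm1 p (q - 1) (-b₀) (neg_mem hb₀)
        convert h using 2 <;> push_cast <;> ring
      · have h := neg_mem hb₀
        convert h using 2 <;> push_cast <;> ring
      · have h1 : d1 (ae 0) = ao 0 := hd1e 0 hi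
        have h1' : d1 (ae' 0) = ao' 0 := hd1e' 0 hi
        rw [hae0] at h1; rw [hae0'] at h1'
        have e : d0 (d1 (-b₀)) = ao' 0 - ao 0 := by
          have h2 : d0 (d1 b₀) = -d1 (d0 b₀) := eq_neg_of_add_eq_zero_left (h01 b₀)
          rw [map_neg, map_neg, h2, neg_neg, ← hab, map_sub, h1, h1']
        simp only [Nat.add_sub_cancel]
        rw [e]; abel
    · have hni : n < i := by omega
      obtain ⟨b, hbM, ⟨c, hcM, hcd⟩, hrel⟩ := ih hn (by omega)
      have hd0e'' : d0 (ae' n) = ao' (n - 1) := by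
        have := hd0e' (n - 1) (by omega)
        rwa [Nat.sub_add_cancel hn] at this
      have hd0en : d0 (ae n) = ao (n - 1) := by
        have := hd0e (n - 1) (by omega)
        rwa [Nat.sub_add_cancel hn] at this
      set x : V := ae' n - ae n - b with hx
      have hdx : d0 x = 0 := by
        rw [hx, map_sub, map_sub, hd0e'', hd0en, hrel]; abel
      have hxM : x ∈ M (p + n) (q - n) := by
        exact sub_mem (sub_mem (haeM' n hni) (haeM n hni)) hbM
      obtain ⟨y, hyM, hdy⟩ := hexact n hn hni (q - n) x hxM hdx
      have haen : ae' n = ae n + b + d0 y := by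
        rw [hdy, hx]; abel
      refine ⟨d1 (-y), ?_, ⟨-y, ?_, rfl⟩, ?_⟩
      · have h := hm1 (p + n) (q - n - 1) (-y) (neg_mem hyM)
        convert h using 2 <;> push_cast <;> ring
      · have h := neg_mem hyM
        convert h using 2 <;> push_cast <;> ring
      · have h1 : d1 (ae n) = ao n := hd1e n hni
        have h1' : d1 (ae' n) = ao' n := hd1e' n hni
        have hb0 : d1 b = 0 := by rw [← hcd]; exact h11 c
        have e : d1 (d0 y) = d0 (d1 (-y)) := by
          rw [map_neg, map_neg]
          exact eq_neg_of_add_eq_zero_right (h01 y)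
        simp only [Nat.add_sub_cancel]
        rw [← h1', haen, map_add, map_add, h1, hb0, e]; abel
end

section
/- Let i ≥ 1 and let a ∈ M(p,q) satisfy d0(a) = 0. Assume the double complex is d0-exact at each of the columns p+1, p+2, …, p+i−1. Then there exists a d_i-sequence (a_0, a_1, …, a_{2i−1}) starting at a. -/
/-- Existence of `d_i`-sequences: if `a ∈ M p q` is a `d0`-cycle and the double complex is
`d0`-exact at the columns `p+1, …, p+i-1`, then there exists a `d_i`-sequence starting at
`a`. -/
theorem exists_dseq
    {R V : Type*} [Ring R] [AddCommGroup V] [Module R V]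
    (M : ℤ → ℤ → Submodule R V) (d0 d1 : V →ₗ[R] V)
    (hm0 : ∀ p q : ℤ, ∀ x ∈ M p q, d0 x ∈ M p (q + 1))
    (hm1 : ∀ p q : ℤ, ∀ x ∈ M p q, d1 x ∈ M (p + 1) q)
    (h00 : ∀ x : V, d0 (d0 x) = 0)
    (h11 : ∀ x : V, d1 (d1 x) = 0)
    (h01 : ∀ x : V, d0 (d1 x) + d1 (d0 x) = 0)
    (p q : ℤ) (i : ℕ) (hi : 1 ≤ i)
    (a : V) (ha : a ∈ M p q) (hda : d0 a = 0)
    (hexact : ∀ m : ℕ, 1 ≤ m → m < i → D0Exact M d0 (p + m)) :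
    ∃ ae ao : ℕ → V, IsDSeq M d0 d1 p q i a ae ao := by
  induction i, hi using Nat.le_induction with
  | base =>
    refine ⟨fun _ => a, fun _ => d1 a, rfl, ?_, ?_, ?_, ?_⟩
    · intro m hm
      interval_cases m
      simpa using ha
    · intro m hm
      interval_cases m
      simpa using hm1 p q a ha
    · intro m hm; rfl
    · intro m hm; omega
  | succ i hi ih =>
    obtain ⟨ae, ao, h0, hme, hmo, hd1, hd0⟩ :=
      ih (fun m h1 h2 => hexact m h1 (by omega))
    have hcast : ((i - 1 : ℕ) : ℤ) = (i : ℤ) - 1 := by omega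
    have hio : ao (i - 1) ∈ M (p + i) (q - (i : ℤ) + 1) := by
      have := hmo (i - 1) (by omega)
      rw [hcast] at this
      convert this using 2 <;> ring
    have hdao : d0 (ao (i - 1)) = 0 := by
      rw [← hd1 (i - 1) (by omega)]
      have key : d0 (d1 (ae (i - 1))) = - d1 (d0 (ae (i - 1))) :=
        eq_neg_of_add_eq_zero_left (h01 (ae (i - 1)))
      rw [key]
      rcases Nat.eq_or_lt_of_le hi with h1 | h2
      · have : (1 : ℕ) - 1 = 0 := rfl
        rw [← h1, this, h0, hda, map_zero, neg_zero]
      · have : i - 1 = (i - 2) + 1 := by omega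
        rw [this, hd0 (i - 2) (by omega), ← hd1 (i - 2) (by omega), h11, neg_zero]
    obtain ⟨y, hy, hdy⟩ :=
      hexact i hi (lt_add_one i) (q - (i : ℤ) + 1) (ao (i - 1)) hio hdao
    have hy' : y ∈ M (p + i) (q - i) := by
      convert hy using 2; ring
    refine ⟨Function.update ae i y, Function.update ao i (d1 y), ?_, ?_, ?_, ?_, ?_⟩
    · rw [Function.update_of_ne (by omega), h0]
    · intro m hm
      rcases Nat.lt_or_ge m i with h | h
      · rw [Function.update_of_ne (by omega)]
        exact hme m h
      · have : m = i := by omega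
        subst this
        rw [Function.update_self]
        exact hy'
    · intro m hm
      rcases Nat.lt_or_ge m i with h | h
      · rw [Function.update_of_ne (by omega)]
        exact hmo m h
      · have : m = i := by omega
        subst this
        rw [Function.update_self]
        exact hm1 _ _ y hy'
    · intro m hm
      rcases Nat.lt_or_ge m i with h | h
      · rw [Function.update_of_ne (by omega), Function.update_of_ne (by omega)]
        exact hd1 m h
      · have : m = i := by omega
        subst this
        rw [Function.update_self, Function.update_self]
    · intro m hm
      rcases Nat.lt_or_ge (m + 1) i with h | h
      · rw [Function.update_of_ne (by omega), Function.update_of_ne (by omega)]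
        exact hd0 m h
      · have hmi : m + 1 = i := by omega
        rw [hmi, Function.update_self, Function.update_of_ne (by omega), hdy]
        congr 1
        omega
end

section
/- Let i ≥ 1, let a ∈ M(p₁,p₂,q) satisfy d0(a) = 0, let (a_0, …, a_{2i−1}) be a d_i-sequence in direction r starting at a, and let (b_0, …, b_{2i−1}) be a d_i-sequence in direction r starting at ds(a) ∈ M(p₁,p₂+1,q). Assume the complex is d0-exact at each of the positions (p₁+m, p₂+1) for m = 1, …, i−1. Then b_{2i−1} + ds(a_{2i−1}) lies in the image of d0 : M(p₁+i, p₂+1, q−i) → M(p₁+i, p₂+1, q−i+1). -/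
/-- The triple complex (given by a family of submodules `M p₁ p₂ q` of an ambient module `V`,
with pairwise anticommuting differentials `d0`, `dr`, `ds`) is `d0`-exact at position
`(p₁', p₂')`: every `d0`-cycle in `M p₁' p₂' q'` is a `d0`-boundary of an element of
`M p₁' p₂' (q'-1)`. -/
def D0Exact3 {R V : Type*} [Ring R] [AddCommGroup V] [Module R V]
    (M : ℤ → ℤ → ℤ → Submodule R V) (d0 : V →ₗ[R] V) (p₁ p₂ : ℤ) : Prop :=
  ∀ q' : ℤ, ∀ x ∈ M p₁ p₂ q', d0 x = 0 → ∃ y ∈ M p₁ p₂ (q' - 1), d0 y = x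

/-- A `d_i`-sequence in direction `r` starting at `a ∈ M p₁ p₂ q`, encoded by its even part
`ae` (with `a_{2m} = ae m ∈ M (p₁+m) p₂ (q-m)`) and its odd part `ao`
(with `a_{2m+1} = ao m ∈ M (p₁+m+1) p₂ (q-m)`), satisfying `a_0 = a`,
`dr (a_{2m}) = a_{2m+1}` for `0 ≤ m ≤ i-1` and `d0 (a_{2m+2}) = a_{2m+1}` for
`0 ≤ m ≤ i-2`. -/
def IsDSeqR {R V : Type*} [Ring R] [AddCommGroup V] [Module R V]
    (M : ℤ → ℤ → ℤ → Submodule R V) (d0 dr : V →ₗ[R] V)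
    (p₁ p₂ q : ℤ) (i : ℕ) (a : V) (ae ao : ℕ → V) : Prop :=
  ae 0 = a ∧
  (∀ m : ℕ, m < i → ae m ∈ M (p₁ + m) p₂ (q - m)) ∧
  (∀ m : ℕ, m < i → ao m ∈ M (p₁ + m + 1) p₂ (q - m)) ∧
  (∀ m : ℕ, m < i → dr (ae m) = ao m) ∧
  (∀ m : ℕ, m + 1 < i → d0 (ae (m + 1)) = ao m)

/-- A `d_j`-sequence in direction `s` starting at `a ∈ M p₁ p₂ q`; defined analogously to
`IsDSeqR` with `ds` in place of `dr` and the second index in place of the first. -/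
def IsDSeqS {R V : Type*} [Ring R] [AddCommGroup V] [Module R V]
    (M : ℤ → ℤ → ℤ → Submodule R V) (d0 ds : V →ₗ[R] V)
    (p₁ p₂ q : ℤ) (j : ℕ) (a : V) (ae ao : ℕ → V) : Prop :=
  ae 0 = a ∧
  (∀ m : ℕ, m < j → ae m ∈ M p₁ (p₂ + m) (q - m)) ∧
  (∀ m : ℕ, m < j → ao m ∈ M p₁ (p₂ + m + 1) (q - m)) ∧
  (∀ m : ℕ, m < j → ds (ae m) = ao m) ∧
  (∀ m : ℕ, m + 1 < j → d0 (ae (m + 1)) = ao m)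

/-- If `a ∈ M p₁ p₂ q` is a `d0`-cycle, `(a_0, …, a_{2i-1})` is a `d_i`-sequence in
direction `r` starting at `a`, `(b_0, …, b_{2i-1})` is a `d_i`-sequence in direction `r`
starting at `ds a ∈ M p₁ (p₂+1) q`, and the complex is `d0`-exact at the positions
`(p₁+m, p₂+1)` for `m = 1, …, i-1`, then `b_{2i-1} + ds (a_{2i-1})` lies in the image of
`d0 : M (p₁+i) (p₂+1) (q-i) → M (p₁+i) (p₂+1) (q-i+1)`. -/
theorem dseq_push_forward_last_term
    {R V : Type*} [Ring R] [AddCommGroup V] [Module R V]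
    (M : ℤ → ℤ → ℤ → Submodule R V) (d0 dr ds : V →ₗ[R] V)
    (hm0 : ∀ p₁ p₂ q : ℤ, ∀ x ∈ M p₁ p₂ q, d0 x ∈ M p₁ p₂ (q + 1))
    (hmr : ∀ p₁ p₂ q : ℤ, ∀ x ∈ M p₁ p₂ q, dr x ∈ M (p₁ + 1) p₂ q)
    (hms : ∀ p₁ p₂ q : ℤ, ∀ x ∈ M p₁ p₂ q, ds x ∈ M p₁ (p₂ + 1) q)
    (h00 : ∀ x : V, d0 (d0 x) = 0)
    (hrr : ∀ x : V, dr (dr x) = 0)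
    (hss : ∀ x : V, ds (ds x) = 0)
    (h0r : ∀ x : V, d0 (dr x) + dr (d0 x) = 0)
    (h0s : ∀ x : V, d0 (ds x) + ds (d0 x) = 0)
    (hrs : ∀ x : V, dr (ds x) + ds (dr x) = 0)
    (p₁ p₂ q : ℤ) (i : ℕ) (hi : 1 ≤ i)
    (a : V) (ha : a ∈ M p₁ p₂ q) (hda : d0 a = 0)
    (ae ao : ℕ → V) (hseq : IsDSeqR M d0 dr p₁ p₂ q i a ae ao)
    (be bo : ℕ → V) (hseq' : IsDSeqR M d0 dr p₁ (p₂ + 1) q i (ds a) be bo)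
    (hexact : ∀ m : ℕ, 1 ≤ m → m < i → D0Exact3 M d0 (p₁ + m) (p₂ + 1)) :
    ∃ y ∈ M (p₁ + i) (p₂ + 1) (q - i), d0 y = bo (i - 1) + ds (ao (i - 1)) := by
  obtain ⟨hae0, haeM, haoM, haer, hae0d⟩ := hseq
  obtain ⟨hbe0, hbeM, hboM, hber, hbe0d⟩ := hseq'
  -- key invariant: x m := be m - ds (ae m) satisfies dr (x m) = dr (d0 c) for some c
  have key : ∀ m : ℕ, m < i →
      ∃ c ∈ M (p₁ + (m : ℤ)) (p₂ + 1) (q - (m : ℤ) - 1),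
        dr (be m - ds (ae m)) = dr (d0 c) := by
    intro m
    induction m with
    | zero =>
      intro _
      refine ⟨0, Submodule.zero_mem _, ?_⟩
      rw [hbe0, hae0]
      simp
    | succ m ih =>
      intro hm1
      obtain ⟨c, hcM, hc⟩ := ih (by omega)
      -- facts about anticommutation
      have h0s' : ∀ x : V, d0 (ds x) = -ds (d0 x) := fun x =>
        eq_neg_of_add_eq_zero_left (h0s x)
      have h0r' : ∀ x : V, d0 (dr x) = -dr (d0 x) := fun x =>
        eq_neg_of_add_eq_zero_left (h0r x)
      have hrs' : ∀ x : V, dr (ds x) = -ds (dr x) := fun x =>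
        eq_neg_of_add_eq_zero_left (hrs x)
      -- dr (x m) = bo m + ds (ao m)
      have hdrx : dr (be m - ds (ae m)) = bo m + ds (ao m) := by
        rw [map_sub, hber m (by omega), hrs' (ae m), haer m (by omega)]
        abel
      set w : V := be (m + 1) - ds (ae (m + 1)) + dr c with hw
      have hdw : d0 w = 0 := by
        rw [hw, map_add, map_sub, hbe0d m hm1, h0s' (ae (m + 1)),
          hae0d m hm1, h0r' c, ← hc, hdrx]
        abel
      -- membership of w
      have hcast : ((m + 1 : ℕ) : ℤ) = (m : ℤ) + 1 := by push_cast; ring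
      have hwM : w ∈ M (p₁ + ((m : ℤ) + 1)) (p₂ + 1) (q - ((m : ℤ) + 1)) := by
        have h1 := hbeM (m + 1) hm1
        have h2 := hms _ _ _ _ (haeM (m + 1) hm1)
        rw [hcast] at h1 h2
        have h3 := hmr _ _ _ _ hcM
        have e3 : p₁ + (m : ℤ) + 1 = p₁ + ((m : ℤ) + 1) := by ring
        have e4 : q - (m : ℤ) - 1 = q - ((m : ℤ) + 1) := by ring
        rw [e3, e4] at h3
        exact add_mem (sub_mem h1 h2) h3
      obtain ⟨c', hc'M, hc'⟩ := hexact (m + 1) (by omega) hm1 _ w hwM hdw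
      simp only [Nat.cast_add, Nat.cast_one] at hc'M ⊢
      refine ⟨c', hc'M, ?_⟩
      rw [hc', hw, map_add, hrr c, add_zero]
  obtain ⟨c, hcM, hc⟩ := key (i - 1) (by omega)
  refine ⟨-dr c, ?_, ?_⟩
  · have h3 := hmr _ _ _ _ hcM
    have e1 : p₁ + ((i - 1 : ℕ) : ℤ) + 1 = p₁ + (i : ℤ) := by omega
    have e2 : q - ((i - 1 : ℕ) : ℤ) - 1 = q - (i : ℤ) := by omega
    rw [e1, e2] at h3
    exact neg_mem h3
  · have h0r' : d0 (dr c) = -dr (d0 c) := eq_neg_of_add_eq_zero_left (h0r c)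
    have hrs' : ∀ x : V, dr (ds x) = -ds (dr x) := fun x =>
      eq_neg_of_add_eq_zero_left (hrs x)
    rw [map_neg, h0r', neg_neg, ← hc, map_sub, hber (i - 1) (by omega),
      hrs' (ae (i - 1)), haer (i - 1) (by omega)]
    abel
end

section
/- Let i ≥ 1 and let (a_0, …, a_{2i−1}) be a d_i-sequence in direction r starting at a_0 ∈ M(p₁,p₂,q). Assume that for each m ∈ {0, …, 2i−1} there exists a'_m ∈ M with a_m = ds(a'_m), and that there exists b_0 ∈ M(p₁,p₂,q−1) with d0(b_0) = a_0. Assume further that the complex is d0-exact at each of the positions (p₁+m, p₂) for m = 1, …, i−1. Then there exists a d_i-sequence (c_0, …, c_{2i−1}) in direction r starting at ds(b_0) ∈ M(p₁,p₂+1,q−1), and an element b_{2i−1} ∈ M(p₁+i,p₂,q−i) such that d0(b_{2i−1}) = a_{2i−1} and ds(b_{2i−1}) = c_{2i−1}. -/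
/-!
Exactness lets one lift the whole `r`-sequence through `d0` one step at a time: starting from
`b₀`, choose `b_{m+1}` with `d0 b_{m+1} = a_{2m+2} + dr b_m`, which is possible because the
right-hand side is a `d0`-cycle, and then `dr (d0 b_m) = a_{2m+1}` for all `m`. Applying `ds`
turns `(b_m, dr b_m)` into the required sequence `c`: since `ds a_{2m+2} = 0`, the relation
`d0 (ds b_{m+1}) = dr (ds b_m)` follows from the anticommutation laws. Finally
`b_{2i-1} = -dr b_{i-1}`.
-/

theorem exists_seq_of_forall_exists_succ {α : Type*} (P : ℕ → α → Prop) (Q : ℕ → α → α → Prop)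
    {x₀ : α} (h₀ : P 0 x₀) (step : ∀ m x, P m x → ∃ y, Q m x y ∧ P (m + 1) y) :
    ∃ b : ℕ → α, b 0 = x₀ ∧ ∀ m, P m (b m) ∧ Q m (b m) (b (m + 1)) := by
  choose f hf using step
  let g : (m : ℕ) → {x // P m x} :=
    fun m => Nat.rec ⟨x₀, h₀⟩ (fun m x => ⟨f m x.1 x.2, (hf m x.1 x.2).2⟩) m
  exact ⟨fun m => (g m).1, rfl, fun m => ⟨(g m).2, (hf m _ (g m).2).1⟩⟩

theorem exists_seq_of_forall_exists_succ_of_lt {α : Type*} (n : ℕ) (P : ℕ → α → Prop)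
    (Q : ℕ → α → α → Prop) {x₀ : α} (h₀ : 0 < n → P 0 x₀)
    (step : ∀ m x, m + 1 < n → P m x → ∃ y, Q m x y ∧ P (m + 1) y) :
    ∃ b : ℕ → α, b 0 = x₀ ∧ (∀ m < n, P m (b m)) ∧ ∀ m, m + 1 < n → Q m (b m) (b (m + 1)) := by
  obtain ⟨b, hb₀, hb⟩ := exists_seq_of_forall_exists_succ (fun m x => m < n → P m x)
    (fun m x y => m + 1 < n → Q m x y) h₀ fun m x hx => by
      by_cases hm : m + 1 < n
      · obtain ⟨y, hQ, hP⟩ := step m x hm (hx (by omega))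
        exact ⟨y, fun _ => hQ, fun _ => hP⟩
      · exact ⟨x, fun h => absurd h hm, fun h => absurd h hm⟩
  exact ⟨b, hb₀, fun m hm => (hb m).1 hm, fun m hm => (hb m).2 hm⟩

section TripleComplex

variable {R V : Type*} [Ring R] [AddCommGroup V] [Module R V] {M : ℤ → ℤ → ℤ → Submodule R V}
  {d0 dr ds : V →ₗ[R] V}

theorem exists_d0_eq_add_dr
    (hmr : ∀ p₁ p₂ q : ℤ, ∀ x ∈ M p₁ p₂ q, dr x ∈ M (p₁ + 1) p₂ q)
    (hrr : ∀ x : V, dr (dr x) = 0) (h0r : ∀ x : V, d0 (dr x) + dr (d0 x) = 0)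
    {p₁ p₂ q : ℤ} (hexact : D0Exact3 M d0 (p₁ + 1) p₂) {a b : V}
    (ha : a ∈ M (p₁ + 1) p₂ q) (hb : b ∈ M p₁ p₂ q) (hab : dr (d0 b) = d0 a) :
    ∃ b' ∈ M (p₁ + 1) p₂ (q - 1), d0 b' = a + dr b ∧ dr (d0 b') = dr a := by
  have hcycle : d0 (a + dr b) = 0 := by
    rw [map_add, ← hab, add_comm, h0r]
  obtain ⟨b', hb'M, hb'⟩ := hexact q _ (add_mem ha (hmr _ _ _ _ hb)) hcycle
  refine ⟨b', hb'M, hb', ?_⟩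
  rw [hb', map_add, hrr, add_zero]

theorem exists_d0_lift_of_isDSeqR
    (hmr : ∀ p₁ p₂ q : ℤ, ∀ x ∈ M p₁ p₂ q, dr x ∈ M (p₁ + 1) p₂ q)
    (hrr : ∀ x : V, dr (dr x) = 0) (h0r : ∀ x : V, d0 (dr x) + dr (d0 x) = 0)
    {p₁ p₂ q : ℤ} {i : ℕ} {a₀ : V} {ae ao : ℕ → V} (hseq : IsDSeqR M d0 dr p₁ p₂ q i a₀ ae ao)
    {b₀ : V} (hb₀ : b₀ ∈ M p₁ p₂ (q - 1)) (hdb₀ : d0 b₀ = a₀)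
    (hexact : ∀ m : ℕ, 1 ≤ m → m < i → D0Exact3 M d0 (p₁ + m) p₂) :
    ∃ b : ℕ → V, b 0 = b₀ ∧
      (∀ m < i, b m ∈ M (p₁ + m) p₂ (q - 1 - m) ∧ dr (d0 (b m)) = ao m) ∧
      ∀ m, m + 1 < i → d0 (b (m + 1)) = ae (m + 1) + dr (b m) := by
  obtain ⟨hae₀, haeM, -, hdrae, hd0ae⟩ := hseq
  refine exists_seq_of_forall_exists_succ_of_lt i
    (fun m b => b ∈ M (p₁ + m) p₂ (q - 1 - m) ∧ dr (d0 b) = ao m)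
    (fun m b b' => d0 b' = ae (m + 1) + dr b) (fun hi => ⟨by simpa using hb₀, ?_⟩) ?_
  · rw [hdb₀, ← hae₀]
    exact hdrae 0 hi
  rintro m b hm ⟨hbM, hdb⟩
  have haM : ae (m + 1) ∈ M (p₁ + m + 1) p₂ (q - 1 - m) := by
    convert haeM (m + 1) (by omega) using 2 <;> push_cast <;> ring
  have hexact' : D0Exact3 M d0 (p₁ + m + 1) p₂ := by
    convert hexact (m + 1) (by omega) hm using 1; push_cast; ring
  obtain ⟨b', hb'M, hb', hdb'⟩ :=
    exists_d0_eq_add_dr hmr hrr h0r hexact' haM hbM (by rw [hdb, hd0ae m hm])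
  refine ⟨b', hb', ?_, by rw [hdb', hdrae (m + 1) (by omega)]⟩
  convert hb'M using 2 <;> push_cast <;> ring

theorem isDSeqR_ds_of_d0_eq_add_dr
    (hmr : ∀ p₁ p₂ q : ℤ, ∀ x ∈ M p₁ p₂ q, dr x ∈ M (p₁ + 1) p₂ q)
    (hms : ∀ p₁ p₂ q : ℤ, ∀ x ∈ M p₁ p₂ q, ds x ∈ M p₁ (p₂ + 1) q)
    (h0s : ∀ x : V, d0 (ds x) + ds (d0 x) = 0) (hrs : ∀ x : V, dr (ds x) + ds (dr x) = 0)
    {p₁ p₂ q : ℤ} {i : ℕ} {a b : ℕ → V} (hbM : ∀ m < i, b m ∈ M (p₁ + m) p₂ (q - 1 - m))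
    (hd0b : ∀ m, m + 1 < i → d0 (b (m + 1)) = a m + dr (b m))
    (hda : ∀ m, m + 1 < i → ds (a m) = 0) :
    IsDSeqR M d0 dr p₁ (p₂ + 1) (q - 1) i (ds (b 0)) (fun m => ds (b m))
      (fun m => dr (ds (b m))) := by
  refine ⟨rfl, fun m hm => hms _ _ _ _ (hbM m hm),
    fun m hm => hmr _ _ _ _ (hms _ _ _ _ (hbM m hm)), fun _ _ => rfl, fun m hm => ?_⟩
  rw [eq_neg_of_add_eq_zero_left (h0s _), hd0b m hm, map_add, hda m hm, zero_add,
    eq_neg_of_add_eq_zero_right (hrs _), neg_neg]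

end TripleComplex

theorem dseq_two_step_push_forward_general
    {R V : Type*} [Ring R] [AddCommGroup V] [Module R V]
    (M : ℤ → ℤ → ℤ → Submodule R V) (d0 dr ds : V →ₗ[R] V)
    (hmr : ∀ p₁ p₂ q : ℤ, ∀ x ∈ M p₁ p₂ q, dr x ∈ M (p₁ + 1) p₂ q)
    (hms : ∀ p₁ p₂ q : ℤ, ∀ x ∈ M p₁ p₂ q, ds x ∈ M p₁ (p₂ + 1) q)
    (hrr : ∀ x : V, dr (dr x) = 0)
    (hss : ∀ x : V, ds (ds x) = 0)
    (h0r : ∀ x : V, d0 (dr x) + dr (d0 x) = 0)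
    (h0s : ∀ x : V, d0 (ds x) + ds (d0 x) = 0)
    (hrs : ∀ x : V, dr (ds x) + ds (dr x) = 0)
    (p₁ p₂ q : ℤ) (i : ℕ) (hi : 1 ≤ i)
    (a₀ : V)
    (ae ao : ℕ → V) (hseq : IsDSeqR M d0 dr p₁ p₂ q i a₀ ae ao)
    (hlift : ∀ m : ℕ, m < i → (∃ x : V, ae m = ds x) ∧ (∃ x : V, ao m = ds x))
    (b₀ : V) (hb₀ : b₀ ∈ M p₁ p₂ (q - 1)) (hdb₀ : d0 b₀ = a₀)
    (hexact : ∀ m : ℕ, 1 ≤ m → m < i → D0Exact3 M d0 (p₁ + m) p₂) :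
    ∃ ce co : ℕ → V, ∃ b' : V,
      IsDSeqR M d0 dr p₁ (p₂ + 1) (q - 1) i (ds b₀) ce co ∧
      b' ∈ M (p₁ + i) p₂ (q - i) ∧ d0 b' = ao (i - 1) ∧ ds b' = co (i - 1) := by
  obtain ⟨b, rfl, hb, hd0b⟩ := exists_d0_lift_of_isDSeqR hmr hrr h0r hseq hb₀ hdb₀ hexact
  have hdae : ∀ m, m + 1 < i → ds (ae (m + 1)) = 0 := fun m hm => by
    obtain ⟨x, hx⟩ := (hlift (m + 1) hm).1
    rw [hx, hss]
  obtain ⟨n, rfl⟩ : ∃ n, i = n + 1 := ⟨i - 1, by omega⟩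
  obtain ⟨hbnM, hdbn⟩ := hb n (by omega)
  refine ⟨_, _, -dr (b n),
    isDSeqR_ds_of_d0_eq_add_dr hmr hms h0s hrs (fun m hm => (hb m hm).1) hd0b hdae, ?_, ?_, ?_⟩
  · refine neg_mem ?_
    convert hmr _ _ _ _ hbnM using 2 <;> push_cast <;> ring
  · rw [Nat.add_sub_cancel, map_neg, eq_neg_of_add_eq_zero_left (h0r _), neg_neg, hdbn]
  · rw [Nat.add_sub_cancel, map_neg, eq_neg_of_add_eq_zero_right (hrs _), neg_neg]

/-- Lemma 3.5 of the paper (two-step push forward): let `(a_0, …, a_{2i-1})` be a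
`d_i`-sequence in direction `r` starting at `a_0 ∈ M p₁ p₂ q`, with each `a_m` in the image
of `ds`, and with `a_0 = d0 b₀` for some `b₀ ∈ M p₁ p₂ (q-1)`. If the complex is `d0`-exact
at the positions `(p₁+m, p₂)` for `m = 1, …, i-1`, then there is a `d_i`-sequence
`(c_0, …, c_{2i-1})` in direction `r` starting at `ds b₀ ∈ M p₁ (p₂+1) (q-1)` and an
element `b_{2i-1} ∈ M (p₁+i) p₂ (q-i)` with `d0 b_{2i-1} = a_{2i-1}` and
`ds b_{2i-1} = c_{2i-1}`. -/
theorem dseq_two_step_push_forward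
    {R V : Type*} [Ring R] [AddCommGroup V] [Module R V]
    (M : ℤ → ℤ → ℤ → Submodule R V) (d0 dr ds : V →ₗ[R] V)
    (hm0 : ∀ p₁ p₂ q : ℤ, ∀ x ∈ M p₁ p₂ q, d0 x ∈ M p₁ p₂ (q + 1))
    (hmr : ∀ p₁ p₂ q : ℤ, ∀ x ∈ M p₁ p₂ q, dr x ∈ M (p₁ + 1) p₂ q)
    (hms : ∀ p₁ p₂ q : ℤ, ∀ x ∈ M p₁ p₂ q, ds x ∈ M p₁ (p₂ + 1) q)
    (h00 : ∀ x : V, d0 (d0 x) = 0)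
    (hrr : ∀ x : V, dr (dr x) = 0)
    (hss : ∀ x : V, ds (ds x) = 0)
    (h0r : ∀ x : V, d0 (dr x) + dr (d0 x) = 0)
    (h0s : ∀ x : V, d0 (ds x) + ds (d0 x) = 0)
    (hrs : ∀ x : V, dr (ds x) + ds (dr x) = 0)
    (p₁ p₂ q : ℤ) (i : ℕ) (hi : 1 ≤ i)
    (a₀ : V) (ha₀ : a₀ ∈ M p₁ p₂ q)
    (ae ao : ℕ → V) (hseq : IsDSeqR M d0 dr p₁ p₂ q i a₀ ae ao)
    (hlift : ∀ m : ℕ, m < i → (∃ x : V, ae m = ds x) ∧ (∃ x : V, ao m = ds x))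
    (b₀ : V) (hb₀ : b₀ ∈ M p₁ p₂ (q - 1)) (hdb₀ : d0 b₀ = a₀)
    (hexact : ∀ m : ℕ, 1 ≤ m → m < i → D0Exact3 M d0 (p₁ + m) p₂) :
    ∃ ce co : ℕ → V, ∃ b' : V,
      IsDSeqR M d0 dr p₁ (p₂ + 1) (q - 1) i (ds b₀) ce co ∧
      b' ∈ M (p₁ + i) p₂ (q - i) ∧ d0 b' = ao (i - 1) ∧ ds b' = co (i - 1) :=
  dseq_two_step_push_forward_general M d0 dr ds hmr hms hrr hss h0r h0s hrs p₁ p₂ q i hi a₀ ae ao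
    hseq hlift b₀ hb₀ hdb₀ hexact
end

section
/- Let i, j ≥ 1 and let a ∈ M(p₁,p₂,q) satisfy d0(a) = 0. Let (a_0, …, a_{2i−1}) be a d_i-sequence in direction r starting at a, let (x_0, …, x_{2j−1}) be a d_j-sequence in direction s starting at a, let (c_0, …, c_{2i−1}) be a d_i-sequence in direction r starting at x_{2j−1} ∈ M(p₁,p₂+j,q−j+1), and let (z_0, …, z_{2j−1}) be a d_j-sequence in direction s starting at a_{2i−1} ∈ M(p₁+i,p₂,q−i+1). Assume the complex is d0-exact at every position (p₁+m, p₂+m') with 0 ≤ m ≤ i, 0 ≤ m' ≤ j and (m,m') different from both (0,0) and (i,j). Then c_{2i−1} + z_{2j−1} lies in the image of d0 : M(p₁+i, p₂+j, q−i−j+1) → M(p₁+i, p₂+j, q−i−j+2). (This expresses the anticommutation d_i^{(r)} d_j^{(s)} + d_j^{(s)} d_i^{(r)} = 0 of the higher differentials on vertical cohomology classes.) -/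
/-!
Fill the staircase between the two `d`-sequences starting at `a`: a grid `w(m, m')`,
`0 ≤ m < i`, `0 ≤ m' < j`, with first column `a_{2m}`, first row `x_{2m'}` and
`d0 w(m, m') = dr w(m-1, m') + ds w(m, m'-1)`; the interior entries exist by `d0`-exactness,
since the right-hand side is `d0`-closed. Applying `dr` to the last row gives a second
`d_j`-sequence in direction `s` from `a_{2i-1}`, and applying `ds` to the last column a second
`d_i`-sequence in direction `r` from `x_{2j-1}`. Two `d`-sequences with the same start have
endpoints differing by a `d0`-boundary, and the two new endpoints `ds dr w` and `dr ds w`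
(at the corner `w = w(i-1, j-1)`) cancel.
-/

section

variable {R V : Type*} [Ring R] [AddCommGroup V] [Module R V]

lemma mem_of_mem_of_index_eq {M : ℤ → ℤ → ℤ → Submodule R V} {a b c a' b' c' : ℤ} {x : V}
    (h : x ∈ M a b c) (ha : a = a') (hb : b = b') (hc : c = c') : x ∈ M a' b' c' := by
  subst ha hb hc
  exact h

lemma d0_dr_eq_ds_dr {d0 dr ds : V →ₗ[R] V} (hrr : ∀ x, dr (dr x) = 0)
    (h0r : ∀ x, d0 (dr x) + dr (d0 x) = 0) (hrs : ∀ x, dr (ds x) + ds (dr x) = 0)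
    {u x t : V} (hu : d0 u = dr x + ds t) : d0 (dr u) = ds (dr t) :=
  calc d0 (dr u) = -dr (d0 u) := eq_neg_of_add_eq_zero_left (h0r u)
    _ = -dr (ds t) := by rw [hu, map_add, hrr, zero_add]
    _ = ds (dr t) := neg_eq_of_add_eq_zero_right (hrs t)

lemma d0_dr_add_ds_eq_zero {d0 dr ds : V →ₗ[R] V} (hrr : ∀ x, dr (dr x) = 0)
    (hss : ∀ x, ds (ds x) = 0) (h0r : ∀ x, d0 (dr x) + dr (d0 x) = 0)
    (h0s : ∀ x, d0 (ds x) + ds (d0 x) = 0) (hrs : ∀ x, dr (ds x) + ds (dr x) = 0)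
    {u v x t y : V} (hu : d0 u = dr x + ds t) (hv : d0 v = dr t + ds y) :
    d0 (dr u + ds v) = 0 := by
  have hsr : ∀ x, ds (dr x) + dr (ds x) = 0 := fun x => (add_comm _ _).trans (hrs x)
  rw [map_add, d0_dr_eq_ds_dr hrr h0r hrs hu,
    d0_dr_eq_ds_dr hss h0s hsr (hv.trans (add_comm _ _)), hsr]

variable {M : ℤ → ℤ → ℤ → Submodule R V} {d0 dr ds : V →ₗ[R] V} {p₁ p₂ q : ℤ}

lemma D0Exact3.invFunOn_spec (h : D0Exact3 M d0 p₁ p₂) {Q : ℤ} {x : V}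
    (hx : x ∈ M p₁ p₂ (Q + 1)) (hdx : d0 x = 0) :
    Function.invFunOn d0 (M p₁ p₂ Q) x ∈ M p₁ p₂ Q ∧
      d0 (Function.invFunOn d0 (M p₁ p₂ Q) x) = x := by
  obtain ⟨y, hy, hdy⟩ := h (Q + 1) x hx hdx
  rw [add_sub_cancel_right] at hy
  exact ⟨Function.invFunOn_mem ⟨y, hy, hdy⟩, Function.invFunOn_eq ⟨y, hy, hdy⟩⟩

namespace IsDSeqR

variable {i : ℕ} {a : V} {ae ao be bo : ℕ → V}

lemma sub (h : IsDSeqR M d0 dr p₁ p₂ q i a ae ao) (h' : IsDSeqR M d0 dr p₁ p₂ q i a be bo) :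
    IsDSeqR M d0 dr p₁ p₂ q i 0 (ae - be) (ao - bo) := by
  obtain ⟨h0, he, ho, hr, hd⟩ := h
  obtain ⟨h0', he', ho', hr', hd'⟩ := h'
  exact ⟨by simp [h0, h0'], fun m hm => sub_mem (he m hm) (he' m hm),
    fun m hm => sub_mem (ho m hm) (ho' m hm), fun m hm => by simp [hr m hm, hr' m hm],
    fun m hm => by simp [hd m hm, hd' m hm]⟩

lemma exists_d0_eq_odd_of_zero (hmr : ∀ p₁ p₂ q : ℤ, ∀ x ∈ M p₁ p₂ q, dr x ∈ M (p₁ + 1) p₂ q)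
    (hrr : ∀ x, dr (dr x) = 0) (h0r : ∀ x, d0 (dr x) + dr (d0 x) = 0)
    (h : IsDSeqR M d0 dr p₁ p₂ q i 0 ae ao)
    (hex : ∀ m : ℕ, 1 ≤ m → m < i → D0Exact3 M d0 (p₁ + m) p₂) {m : ℕ} (hm : m < i) :
    ∃ y ∈ M (p₁ + m + 1) p₂ (q - m - 1), d0 y = ao m := by
  obtain ⟨h0, he, -, hr, hd⟩ := h
  have key : ∀ m < i, ∃ w ∈ M (p₁ + m) p₂ (q - m - 1), dr (d0 w) = ao m := by
    intro m
    induction m with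
    | zero => exact fun hi => ⟨0, zero_mem _, by rw [← hr 0 hi, h0]; simp⟩
    | succ m ih =>
      intro hm
      obtain ⟨w, hw, hwo⟩ := ih (by omega)
      have hclosed : d0 (ae (m + 1) + dr w) = 0 := by
        rw [map_add, hd m hm, ← hwo, add_comm]
        exact h0r w
      have hmem : ae (m + 1) + dr w ∈ M (p₁ + (m + 1 : ℕ)) p₂ (q - (m + 1 : ℕ) - 1 + 1) :=
        add_mem (mem_of_mem_of_index_eq (he _ hm) rfl rfl (by ring))
          (mem_of_mem_of_index_eq (hmr _ _ _ w hw) (by push_cast; ring) rfl (by push_cast; ring))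
      obtain ⟨hw'_mem, hw'⟩ := (hex (m + 1) (by omega) hm).invFunOn_spec hmem hclosed
      refine ⟨_, hw'_mem, ?_⟩
      rw [hw', map_add, hrr, add_zero, hr _ hm]
  obtain ⟨w, hw, hwo⟩ := key m hm
  refine ⟨-dr w, neg_mem (hmr _ _ _ w hw), ?_⟩
  rw [map_neg, ← hwo]
  exact neg_eq_of_add_eq_zero_right (h0r w)

end IsDSeqR

-- `IsDSeqS M` is definitionally `IsDSeqR` for the family with its first two indices swapped.
namespace IsDSeqS

variable {j : ℕ} {a : V} {ae ao be bo : ℕ → V}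

lemma sub (h : IsDSeqS M d0 ds p₁ p₂ q j a ae ao) (h' : IsDSeqS M d0 ds p₁ p₂ q j a be bo) :
    IsDSeqS M d0 ds p₁ p₂ q j 0 (ae - be) (ao - bo) :=
  IsDSeqR.sub (M := fun p₂ p₁ q => M p₁ p₂ q) h h'

lemma exists_d0_eq_odd_of_zero (hms : ∀ p₁ p₂ q : ℤ, ∀ x ∈ M p₁ p₂ q, ds x ∈ M p₁ (p₂ + 1) q)
    (hss : ∀ x, ds (ds x) = 0) (h0s : ∀ x, d0 (ds x) + ds (d0 x) = 0)
    (h : IsDSeqS M d0 ds p₁ p₂ q j 0 ae ao)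
    (hex : ∀ m : ℕ, 1 ≤ m → m < j → D0Exact3 M d0 p₁ (p₂ + m)) {m : ℕ} (hm : m < j) :
    ∃ y ∈ M p₁ (p₂ + m + 1) (q - m - 1), d0 y = ao m :=
  IsDSeqR.exists_d0_eq_odd_of_zero (M := fun p₂ p₁ q => M p₁ p₂ q)
    (fun p₂ p₁ q => hms p₁ p₂ q) hss h0s h hex hm

end IsDSeqS

variable (M d0 dr ds p₁ p₂ q) in
/-- `w (m + 1) (m' + 1)` is the staircase entry at `(m, m')`; row and column `0` are padding,
so that the entries on the boundary satisfy the same relation as the interior ones. -/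
structure IsStaircase (i j : ℕ) (w : ℕ → ℕ → V) : Prop where
  mem : ∀ m < i, ∀ m' < j, w (m + 1) (m' + 1) ∈ M (p₁ + m) (p₂ + m') (q - m - m')
  d0_eq : ∀ m < i, ∀ m' < j,
    d0 (w (m + 1) (m' + 1)) = dr (w m (m' + 1)) + ds (w (m + 1) m')

namespace IsStaircase

variable {i j : ℕ} {w : ℕ → ℕ → V}

lemma transpose (hw : IsStaircase M d0 dr ds p₁ p₂ q i j w) :
    IsStaircase (fun p₂ p₁ q => M p₁ p₂ q) d0 ds dr p₂ p₁ q j i (fun m m' => w m' m) where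
  mem m hm m' hm' := mem_of_mem_of_index_eq (hw.mem m' hm' m hm) rfl rfl (sub_right_comm _ _ _)
  d0_eq m hm m' hm' := (hw.d0_eq m' hm' m hm).trans (add_comm _ _)

lemma isDSeqS_dr_row (hw : IsStaircase M d0 dr ds p₁ p₂ q i j w)
    (hmr : ∀ p₁ p₂ q : ℤ, ∀ x ∈ M p₁ p₂ q, dr x ∈ M (p₁ + 1) p₂ q)
    (hms : ∀ p₁ p₂ q : ℤ, ∀ x ∈ M p₁ p₂ q, ds x ∈ M p₁ (p₂ + 1) q)
    (hrr : ∀ x, dr (dr x) = 0) (h0r : ∀ x, d0 (dr x) + dr (d0 x) = 0)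
    (hrs : ∀ x, dr (ds x) + ds (dr x) = 0) {m : ℕ} (hm : m < i) :
    IsDSeqS M d0 ds (p₁ + m + 1) p₂ (q - m) j (dr (w (m + 1) 1))
      (fun m' => dr (w (m + 1) (m' + 1))) (fun m' => ds (dr (w (m + 1) (m' + 1)))) :=
  ⟨rfl, fun m' hm' => hmr _ _ _ _ (hw.mem m hm m' hm'),
    fun m' hm' => hms _ _ _ _ (hmr _ _ _ _ (hw.mem m hm m' hm')), fun _ _ => rfl,
    fun m' hm' => d0_dr_eq_ds_dr hrr h0r hrs (hw.d0_eq m hm (m' + 1) hm')⟩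

lemma isDSeqR_ds_col (hw : IsStaircase M d0 dr ds p₁ p₂ q i j w)
    (hmr : ∀ p₁ p₂ q : ℤ, ∀ x ∈ M p₁ p₂ q, dr x ∈ M (p₁ + 1) p₂ q)
    (hms : ∀ p₁ p₂ q : ℤ, ∀ x ∈ M p₁ p₂ q, ds x ∈ M p₁ (p₂ + 1) q)
    (hss : ∀ x, ds (ds x) = 0) (h0s : ∀ x, d0 (ds x) + ds (d0 x) = 0)
    (hrs : ∀ x, dr (ds x) + ds (dr x) = 0) {m' : ℕ} (hm' : m' < j) :
    IsDSeqR M d0 dr p₁ (p₂ + m' + 1) (q - m') i (ds (w 1 (m' + 1)))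
      (fun m => ds (w (m + 1) (m' + 1))) (fun m => dr (ds (w (m + 1) (m' + 1)))) :=
  hw.transpose.isDSeqS_dr_row (fun p₂ p₁ q => hms p₁ p₂ q) (fun p₂ p₁ q => hmr p₁ p₂ q) hss h0s
    (fun x => (add_comm _ _).trans (hrs x)) hm'

end IsStaircase

variable (M d0 dr ds p₁ p₂ q) in
noncomputable def staircase (ae xe : ℕ → V) : ℕ → ℕ → V
  | 0, _ => 0
  | _ + 1, 0 => 0
  | m + 1, 1 => ae m
  | 1, m' + 2 => xe (m' + 1)
  | m + 2, m' + 2 =>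
    Function.invFunOn d0 (M (p₁ + (m + 1 : ℕ)) (p₂ + (m' + 1 : ℕ)) (q - (m + 1 : ℕ) - (m' + 1 : ℕ)))
      (dr (staircase ae xe (m + 1) (m' + 2)) + ds (staircase ae xe (m + 2) (m' + 1)))

lemma exists_isStaircase (hmr : ∀ p₁ p₂ q : ℤ, ∀ x ∈ M p₁ p₂ q, dr x ∈ M (p₁ + 1) p₂ q)
    (hms : ∀ p₁ p₂ q : ℤ, ∀ x ∈ M p₁ p₂ q, ds x ∈ M p₁ (p₂ + 1) q)
    (hrr : ∀ x, dr (dr x) = 0) (hss : ∀ x, ds (ds x) = 0)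
    (h0r : ∀ x, d0 (dr x) + dr (d0 x) = 0) (h0s : ∀ x, d0 (ds x) + ds (d0 x) = 0)
    (hrs : ∀ x, dr (ds x) + ds (dr x) = 0) {i j : ℕ} {a : V} (hda : d0 a = 0)
    {ae ao xe xo : ℕ → V} (hA : IsDSeqR M d0 dr p₁ p₂ q i a ae ao)
    (hX : IsDSeqS M d0 ds p₁ p₂ q j a xe xo)
    (hex : ∀ m m' : ℕ, 1 ≤ m → m < i → 1 ≤ m' → m' < j → D0Exact3 M d0 (p₁ + m) (p₂ + m')) :
    ∃ w, IsStaircase M d0 dr ds p₁ p₂ q i j w ∧ (∀ m, w (m + 1) 1 = ae m) ∧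
      ∀ m', w 1 (m' + 1) = xe m' := by
  obtain ⟨hA0, hAe, -, hAr, hAd⟩ := hA
  obtain ⟨hX0, hXe, -, hXs, hXd⟩ := hX
  set w := staircase M d0 dr ds p₁ p₂ q ae xe
  have hw_col (m : ℕ) : w (m + 1) 1 = ae m := by simp only [w, staircase]
  have hw_row : ∀ m', w 1 (m' + 1) = xe m'
    | 0 => by rw [hw_col, hA0, hX0]
    | m' + 1 => by simp only [w, staircase]
  suffices h : ∀ m < i, ∀ m' < j, w (m + 1) (m' + 1) ∈ M (p₁ + m) (p₂ + m') (q - m - m') ∧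
      d0 (w (m + 1) (m' + 1)) = dr (w m (m' + 1)) + ds (w (m + 1) m') from
    ⟨w, ⟨fun m hm m' hm' => (h m hm m' hm').1, fun m hm m' hm' => (h m hm m' hm').2⟩,
      hw_col, hw_row⟩
  intro m
  induction m with
  | zero =>
    intro _ m' hm'
    rw [hw_row]
    refine ⟨mem_of_mem_of_index_eq (hXe m' hm') (by simp) rfl (by simp), ?_⟩
    cases m' with
    | zero => simp [w, staircase, hX0, hda]
    | succ m' => simp [w, staircase, hXd m' hm', ← hXs m' (by omega), hw_row]
  | succ m ihm =>
    intro hm m'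
    induction m' with
    | zero =>
      intro _
      rw [hw_col]
      refine ⟨mem_of_mem_of_index_eq (hAe _ hm) rfl (by simp) (by simp), ?_⟩
      simp [w, staircase, hAd m hm, ← hAr m (by omega), hw_col]
    | succ m' ihm' =>
      intro hm'
      obtain ⟨hu_mem, hu⟩ := ihm (by omega) (m' + 1) hm'
      obtain ⟨hv_mem, hv⟩ := ihm' (by omega)
      have hmem : dr (w (m + 1) (m' + 2)) + ds (w (m + 2) (m' + 1)) ∈
          M (p₁ + (m + 1 : ℕ)) (p₂ + (m' + 1 : ℕ)) (q - (m + 1 : ℕ) - (m' + 1 : ℕ) + 1) :=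
        add_mem (mem_of_mem_of_index_eq (hmr _ _ _ _ hu_mem) (by push_cast; ring) rfl
            (by push_cast; ring))
          (mem_of_mem_of_index_eq (hms _ _ _ _ hv_mem) rfl (by push_cast; ring)
            (by push_cast; ring))
      simpa only [w, staircase] using
        (hex (m + 1) (m' + 1) (by omega) hm (by omega) hm').invFunOn_spec hmem
          (d0_dr_add_ds_eq_zero hrr hss h0r h0s hrs hu hv)

end

theorem higher_differentials_anticommute_general
    {R V : Type*} [Ring R] [AddCommGroup V] [Module R V]
    (M : ℤ → ℤ → ℤ → Submodule R V) (d0 dr ds : V →ₗ[R] V)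
    (hmr : ∀ p₁ p₂ q : ℤ, ∀ x ∈ M p₁ p₂ q, dr x ∈ M (p₁ + 1) p₂ q)
    (hms : ∀ p₁ p₂ q : ℤ, ∀ x ∈ M p₁ p₂ q, ds x ∈ M p₁ (p₂ + 1) q)
    (hrr : ∀ x : V, dr (dr x) = 0)
    (hss : ∀ x : V, ds (ds x) = 0)
    (h0r : ∀ x : V, d0 (dr x) + dr (d0 x) = 0)
    (h0s : ∀ x : V, d0 (ds x) + ds (d0 x) = 0)
    (hrs : ∀ x : V, dr (ds x) + ds (dr x) = 0)
    (p₁ p₂ q : ℤ) (i j : ℕ) (hi : 1 ≤ i) (hj : 1 ≤ j)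
    (a : V) (hda : d0 a = 0)
    (ae ao : ℕ → V) (hA : IsDSeqR M d0 dr p₁ p₂ q i a ae ao)
    (xe xo : ℕ → V) (hX : IsDSeqS M d0 ds p₁ p₂ q j a xe xo)
    (ce co : ℕ → V)
    (hC : IsDSeqR M d0 dr p₁ (p₂ + j) (q - j + 1) i (xo (j - 1)) ce co)
    (ze zo : ℕ → V)
    (hZ : IsDSeqS M d0 ds (p₁ + i) p₂ (q - i + 1) j (ao (i - 1)) ze zo)
    (hexact : ∀ m m' : ℕ, m ≤ i → m' ≤ j → ¬(m = 0 ∧ m' = 0) → ¬(m = i ∧ m' = j) →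
        D0Exact3 M d0 (p₁ + m) (p₂ + m')) :
    ∃ y ∈ M (p₁ + i) (p₂ + j) (q - i - j + 1), d0 y = co (i - 1) + zo (j - 1) := by
  obtain ⟨w, hw, hw_col, hw_row⟩ := exists_isStaircase hmr hms hrr hss h0r h0s hrs hda hA hX
    (fun m m' _ hm _ hm' => hexact m m' hm.le hm'.le (by omega) (by omega))
  obtain ⟨-, -, -, hA_dr, -⟩ := hA
  obtain ⟨-, -, -, hX_ds, -⟩ := hX
  have hE := hw.isDSeqS_dr_row hmr hms hrr h0r hrs (m := i - 1) (by omega)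
  rw [hw_col, hA_dr _ (by omega), show p₁ + ↑(i - 1) + 1 = p₁ + i by omega,
    show q - ↑(i - 1) = q - i + 1 by omega] at hE
  have hF := hw.isDSeqR_ds_col hmr hms hss h0s hrs (m' := j - 1) (by omega)
  rw [hw_row, hX_ds _ (by omega), show p₂ + ↑(j - 1) + 1 = p₂ + j by omega,
    show q - ↑(j - 1) = q - j + 1 by omega] at hF
  obtain ⟨y₁, hy₁, hdy₁⟩ := (hZ.sub hE).exists_d0_eq_odd_of_zero hms hss h0s
    (fun m' _ hm' => hexact i m' le_rfl hm'.le (by omega) (by omega)) (m := j - 1) (by omega)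
  obtain ⟨y₂, hy₂, hdy₂⟩ := (hC.sub hF).exists_d0_eq_odd_of_zero hmr hrr h0r
    (fun m _ hm => hexact m j hm.le le_rfl (by omega) (by omega)) (m := i - 1) (by omega)
  refine ⟨y₁ + y₂, add_mem (mem_of_mem_of_index_eq hy₁ rfl (by omega) (by omega))
    (mem_of_mem_of_index_eq hy₂ (by omega) rfl (by omega)), ?_⟩
  set t := w (i - 1 + 1) (j - 1 + 1)
  calc d0 (y₁ + y₂) = co (i - 1) + zo (j - 1) - (dr (ds t) + ds (dr t)) := by
        rw [map_add, hdy₁, hdy₂, Pi.sub_apply, Pi.sub_apply]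
        abel
    _ = co (i - 1) + zo (j - 1) := by rw [hrs, sub_zero]

/-- Proposition 3.3 of the paper, on the level of cycles: the higher differentials
anticommute, `d_i^{(r)} d_j^{(s)} + d_j^{(s)} d_i^{(r)} = 0`, on vertical cohomology
classes. Concretely: with `d_i`- and `d_j`-sequences as below, `c_{2i-1} + z_{2j-1}` lies
in the image of `d0 : M (p₁+i) (p₂+j) (q-i-j+1) → M (p₁+i) (p₂+j) (q-i-j+2)`. -/
theorem higher_differentials_anticommute
    {R V : Type*} [Ring R] [AddCommGroup V] [Module R V]
    (M : ℤ → ℤ → ℤ → Submodule R V) (d0 dr ds : V →ₗ[R] V)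
    (hm0 : ∀ p₁ p₂ q : ℤ, ∀ x ∈ M p₁ p₂ q, d0 x ∈ M p₁ p₂ (q + 1))
    (hmr : ∀ p₁ p₂ q : ℤ, ∀ x ∈ M p₁ p₂ q, dr x ∈ M (p₁ + 1) p₂ q)
    (hms : ∀ p₁ p₂ q : ℤ, ∀ x ∈ M p₁ p₂ q, ds x ∈ M p₁ (p₂ + 1) q)
    (h00 : ∀ x : V, d0 (d0 x) = 0)
    (hrr : ∀ x : V, dr (dr x) = 0)
    (hss : ∀ x : V, ds (ds x) = 0)
    (h0r : ∀ x : V, d0 (dr x) + dr (d0 x) = 0)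
    (h0s : ∀ x : V, d0 (ds x) + ds (d0 x) = 0)
    (hrs : ∀ x : V, dr (ds x) + ds (dr x) = 0)
    (p₁ p₂ q : ℤ) (i j : ℕ) (hi : 1 ≤ i) (hj : 1 ≤ j)
    (a : V) (ha : a ∈ M p₁ p₂ q) (hda : d0 a = 0)
    (ae ao : ℕ → V) (hA : IsDSeqR M d0 dr p₁ p₂ q i a ae ao)
    (xe xo : ℕ → V) (hX : IsDSeqS M d0 ds p₁ p₂ q j a xe xo)
    (ce co : ℕ → V)
    (hC : IsDSeqR M d0 dr p₁ (p₂ + j) (q - j + 1) i (xo (j - 1)) ce co)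
    (ze zo : ℕ → V)
    (hZ : IsDSeqS M d0 ds (p₁ + i) p₂ (q - i + 1) j (ao (i - 1)) ze zo)
    (hexact : ∀ m m' : ℕ, m ≤ i → m' ≤ j → ¬(m = 0 ∧ m' = 0) → ¬(m = i ∧ m' = j) →
        D0Exact3 M d0 (p₁ + m) (p₂ + m')) :
    ∃ y ∈ M (p₁ + i) (p₂ + j) (q - i - j + 1), d0 y = co (i - 1) + zo (j - 1) :=
  higher_differentials_anticommute_general M d0 dr ds hmr hms hrr hss h0r h0s hrs p₁ p₂ q i j hi hj
    a hda ae ao hA xe xo hX ce co hC ze zo hZ hexact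
end

section
/- Assume d_I(w) ≠ 0 and assume d_J(w) = 0 for every I-neighbour J. Then d_K(w) = 0 for every strictly increasing map K : Fin l → Fin k with K < I in the degree-lexicographic order. -/
/-- The minor `d_I(w)` of a `k × l` matrix `w` on the rows selected by the strictly
increasing map `I : Fin l → Fin k`. -/
noncomputable def minor {k l : ℕ} (w : Matrix (Fin k) (Fin l) ℂ) (I : Fin l → Fin k) : ℂ :=
  (w.submatrix I id).det

/-- `J` is an `I`-neighbour: there is `t` such that `J m = I m` for `m < t`, `J t < I t`,
and for every `m > t` there is `r ≥ t` with `J m = I r`. -/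
def IsNeighbour {k l : ℕ} (I J : Fin l → Fin k) : Prop :=
  ∃ t : Fin l, (∀ m : Fin l, m < t → J m = I m) ∧ J t < I t ∧
    ∀ m : Fin l, t < m → ∃ r : Fin l, t ≤ r ∧ J m = I r

/-- The degree-lexicographic order: `K < I` iff `|K| < |I|`, or `|K| = |I|` and at the
first index `t` where `K` and `I` differ one has `K t < I t`. -/
def DegLexLt {k l : ℕ} (K I : Fin l → Fin k) : Prop :=
  (∑ t : Fin l, (K t : ℕ)) < ∑ t : Fin l, (I t : ℕ) ∨
  ((∑ t : Fin l, (K t : ℕ)) = (∑ t : Fin l, (I t : ℕ)) ∧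
    ∃ t : Fin l, (∀ m : Fin l, m < t → K m = I m) ∧ K t < I t)

/-- Lemma 4.6 of the paper: if `d_I(w) ≠ 0` and `d_J(w) = 0` for every `I`-neighbour `J`,
then `d_K(w) = 0` for every strictly increasing `K` which is smaller than `I` in the
degree-lexicographic order. -/
theorem minor_vanishes_below
    (k l : ℕ) (hl : 1 ≤ l) (hlk : l ≤ k)
    (w : Matrix (Fin k) (Fin l) ℂ) (I : Fin l → Fin k) (hI : StrictMono I)
    (hdI : minor w I ≠ 0)
    (hJ : ∀ J : Fin l → Fin k, StrictMono J → IsNeighbour I J → minor w J = 0) :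
    ∀ K : Fin l → Fin k, StrictMono K → DegLexLt K I → minor w K = 0 := by
  classical
  intro K hK hKI
  haveI : NeZero l := ⟨by omega⟩
  set v : Fin l → (Fin l → ℂ) := fun m => w (I m) with hv
  have hVdet : (Matrix.of v).det ≠ 0 := hdI
  have hunit : IsUnit (Matrix.of v) :=
    (Matrix.isUnit_iff_isUnit_det _).mpr (isUnit_iff_ne_zero.mpr hVdet)
  have hli : LinearIndependent ℂ v := Matrix.linearIndependent_rows_iff_isUnit.mpr hunit
  haveI : Nonempty (Fin l) := ⟨⟨0, by omega⟩⟩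
  have hcard : Fintype.card (Fin l) = Module.finrank ℂ (Fin l → ℂ) := by simp
  let B : Module.Basis (Fin l) ℂ (Fin l → ℂ) := basisOfLinearIndependentOfCardEqFinrank hli hcard
  have hB : ⇑B = v := coe_basisOfLinearIndependentOfCardEqFinrank hli hcard
  have hIlt : ∀ p q : Fin l, (p : ℕ) < (q : ℕ) → I p < I q := fun p q h => hI (Fin.lt_def.mpr h)
  have hIle : ∀ p q : Fin l, (p : ℕ) ≤ (q : ℕ) → I p ≤ I q :=
    fun p q h => hI.monotone (Fin.le_def.mpr h)
  -- Key step 1: the neighbour argument.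
  have key1 : ∀ t s : Fin l, t ≤ s → ∀ a : Fin k,
      (∀ m : Fin l, m < t → I m < a) → a < I t → B.repr (w a) s = 0 := by
    intro t s hts a hbelow hat
    have hts' : (t : ℕ) ≤ (s : ℕ) := hts
    -- the permutation
    let g : Fin l → Fin l := fun m =>
      if (m : ℕ) < (t : ℕ) then m else if (m : ℕ) = (t : ℕ) then s
      else if (m : ℕ) ≤ (s : ℕ) then ⟨(m : ℕ) - 1, by have := m.isLt; omega⟩ else m
    have hginj : Function.Injective g := by
      intro x y hxy
      have hx := x.isLt; have hy := y.isLt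
      simp only [g] at hxy
      split_ifs at hxy <;>
        (apply Fin.ext; have := congrArg Fin.val hxy; simp -failIfUnchanged only [Fin.val_mk] at this <;> omega)
    let P : Equiv.Perm (Fin l) := Equiv.ofBijective g (Finite.injective_iff_bijective.mp hginj)
    have hPapp : ∀ m, P m = g m := fun m => rfl
    have hPt : P t = s := by
      show g t = s
      simp [g]
    -- the neighbour
    let J : Fin l → Fin k := fun m =>
      if (m : ℕ) < (t : ℕ) then I m else if (m : ℕ) = (t : ℕ) then a
      else if (m : ℕ) ≤ (s : ℕ) then I ⟨(m : ℕ) - 1, by have := m.isLt; omega⟩ else I m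
    have hJg : ∀ m : Fin l, m ≠ t → J m = I (g m) := by
      intro m hm
      have hm' : (m : ℕ) ≠ (t : ℕ) := fun h => hm (Fin.ext h)
      simp only [J, g]
      split_ifs <;> first | rfl | exact absurd ‹(m : ℕ) = (t : ℕ)› hm'
    have hJt : J t = a := by
      simp [J]
    have hJmono : StrictMono J := by
      intro x y hxy
      have hxy' : (x : ℕ) < (y : ℕ) := hxy
      have hx := x.isLt; have hy := y.isLt
      simp only [J]
      split_ifs <;>
        first
        | (exfalso; omega)
        | (exact hIlt _ _ (by first | omega | (simp; omega)))
        | (exact lt_of_lt_of_le hat (hIle _ _ (by first | omega | (simp; omega))))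
        | (exact hbelow _ (Fin.lt_def.mpr (by first | omega | (simp; omega))))
    have hnb : IsNeighbour I J := by
      refine ⟨t, fun m hm => ?_, ?_, fun m hm => ?_⟩
      · simp only [J]; rw [if_pos (show (m : ℕ) < (t : ℕ) from hm)]
      · rw [hJt]; exact hat
      · have hm' : (t : ℕ) < (m : ℕ) := hm
        have hmlt := m.isLt
        have hge : (t : ℕ) ≤ (g m : ℕ) := by
          simp only [g]
          split_ifs <;> first | omega | (simp; omega)
        exact ⟨g m, Fin.le_def.mpr hge, hJg m (ne_of_gt hm)⟩
    have hmJ : minor w J = 0 := hJ J hJmono hnb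
    -- compute the minor
    let A : Matrix (Fin l) (Fin l) ℂ := (Matrix.of v).submatrix P id
    have hArow : ∀ p, A p = v (P p) := fun p => rfl
    have hAJ : w.submatrix J id = A.updateRow t (w a) := by
      ext m c
      by_cases hm : m = t
      · subst hm
        rw [Matrix.updateRow_self]
        show w (J m) c = w a c
        rw [hJt]
      · rw [Matrix.updateRow_ne hm]
        show w (J m) c = v (P m) c
        rw [hJg m hm, hPapp]
    have hsum : w a = ∑ p : Fin l, B.repr (w a) (P p) • A p := by
      simp only [hArow]
      rw [Equiv.sum_comp P (fun q => B.repr (w a) q • v q)]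
      rw [← hB]
      exact (B.sum_repr (w a)).symm
    have hdetJ : minor w J = B.repr (w a) s • A.det := by
      show (w.submatrix J id).det = _
      rw [hAJ]
      conv_lhs => rw [hsum]
      rw [Matrix.det_updateRow_sum A t (fun p => B.repr (w a) (P p)), hPt]
    have hAdet : A.det = (Equiv.Perm.sign P : ℂ) * (Matrix.of v).det :=
      Matrix.det_permute P (Matrix.of v)
    have hsign : ((Equiv.Perm.sign P : ℤ) : ℂ) ≠ 0 := by
      rcases Int.units_eq_one_or (Equiv.Perm.sign P) with h | h <;> simp [h]
    have hAdet0 : A.det ≠ 0 := by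
      rw [hAdet]
      exact mul_ne_zero hsign hVdet
    rw [hmJ] at hdetJ
    rcases mul_eq_zero.mp hdetJ.symm with h | h
    · exact h
    · exact absurd h hAdet0
  -- Key step 2: coefficients vanish below the diagonal.
  have key2 : ∀ (a : Fin k) (s : Fin l), a < I s → B.repr (w a) s = 0 := by
    intro a s has
    by_cases hrange : ∃ r, I r = a
    · obtain ⟨r, rfl⟩ := hrange
      have hrs : r ≠ s := fun h => absurd has (by rw [h]; exact lt_irrefl _)
      have h1 : w (I r) = B r := by rw [hB]
      rw [h1, B.repr_self, Finsupp.single_apply, if_neg hrs]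
    · set S : Finset (Fin l) := Finset.univ.filter (fun r => a < I r) with hS
      have hsS : s ∈ S := by simp [hS, has]
      have hSne : S.Nonempty := ⟨s, hsS⟩
      set t := S.min' hSne with ht
      have hta : a < I t := (Finset.mem_filter.mp (S.min'_mem hSne)).2
      have hts : t ≤ s := S.min'_le s hsS
      refine key1 t s hts a (fun m hmt => ?_) hta
      have h1 : ¬ a < I m := fun h =>
        absurd (S.min'_le m (by simp [hS, h])) (not_le.mpr hmt)
      exact lt_of_le_of_ne (not_lt.mp h1) (fun h => hrange ⟨m, h⟩)
  -- Step 3: the determinant expansion.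
  let D : Matrix (Fin l) (Fin l) ℂ := Matrix.of fun m r => B.repr (w (K m)) r
  have hKD : w.submatrix K id = D * Matrix.of v := by
    ext m c
    have h1 := B.sum_repr (w (K m))
    rw [hB] at h1
    show w (K m) c = _
    rw [Matrix.mul_apply]
    calc w (K m) c = (∑ r, B.repr (w (K m)) r • v r) c := by rw [h1]
      _ = ∑ r, B.repr (w (K m)) r * v r c := by
          rw [Finset.sum_apply]; simp [Pi.smul_apply]
      _ = ∑ r, D m r * Matrix.of v r c := rfl
  have hD : D.det = 0 := by
    rw [Matrix.det_apply]
    refine Finset.sum_eq_zero fun σ _ => ?_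
    have hzero : ∃ i, D (σ i) i = 0 := by
      by_contra hne
      push_neg at hne
      have hle : ∀ i : Fin l, (I i : ℕ) ≤ (K (σ i) : ℕ) := by
        intro i
        by_contra hlt
        exact hne i (key2 (K (σ i)) i (Fin.lt_def.mpr (by omega)))
      have hcomp : ∑ i : Fin l, (K (σ i) : ℕ) = ∑ i : Fin l, (K i : ℕ) :=
        Equiv.sum_comp σ (fun i => (K i : ℕ))
      have hsum1 : ∑ i : Fin l, (I i : ℕ) ≤ ∑ i : Fin l, (K i : ℕ) := by
        rw [← hcomp]
        exact Finset.sum_le_sum fun i _ => hle i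
      rcases hKI with h | ⟨he, t, hagr, hlt⟩
      · omega
      · have hall : ∀ i : Fin l, (I i : ℕ) = (K (σ i) : ℕ) := by
          by_contra hx
          push_neg at hx
          obtain ⟨i, hi⟩ := hx
          have : ∑ i : Fin l, (I i : ℕ) < ∑ i : Fin l, (K (σ i) : ℕ) :=
            Finset.sum_lt_sum (fun i _ => hle i) ⟨i, Finset.mem_univ i, lt_of_le_of_ne (hle i) hi⟩
          omega
        have hrange : Set.range K = Set.range I := by
          apply Set.Subset.antisymm
          · rintro x ⟨j, rfl⟩
            exact ⟨σ.symm j, by rw [Fin.ext_iff, hall (σ.symm j), Equiv.apply_symm_apply]⟩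
          · rintro x ⟨j, rfl⟩
            exact ⟨σ j, (Fin.ext (hall j)).symm⟩
        haveI : WellFoundedLT (Fin l) := Finite.to_wellFoundedLT
        have hKIeq : K = I := (hK.range_inj hI).mp hrange
        rw [hKIeq] at hlt
        exact absurd hlt (lt_irrefl _)
    obtain ⟨i, hi⟩ := hzero
    have hp : ∏ i : Fin l, D (σ i) i = 0 := Finset.prod_eq_zero (Finset.mem_univ i) hi
    rw [hp]
    simp
  show (w.submatrix K id).det = 0
  rw [hKD, Matrix.det_mul, hD, zero_mul]
end

section
/- For every strictly increasing map I : Fin l → Fin k, the number of I-neighbours J equals the sum over t : Fin l of (I(t) − t) (as natural numbers); equivalently, writing the selected rows in 1-based indexing as i_1 < i_2 < … < i_l with the convention i_0 = 0, the number of I-neighbours equals Σ_{r=1}^{l} (i_r − i_{r−1} − 1)(l − r + 1) = Σ_{r=1}^{l} i_r − l(l+1)/2. -/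
namespace CardNbrsAux

open Finset

variable {k l : ℕ}

/-- The number of values of `I` below `a`. -/
def tOf (I : Fin l → Fin k) (a : Fin k) : ℕ :=
  #(Finset.univ.filter fun m => (I m : ℕ) < (a : ℕ))

/-- The neighbour obtained by dropping `I s` and inserting `a`. -/
def nbr (I : Fin l → Fin k) (s : Fin l) (a : Fin k) : Fin l → Fin k :=
  fun m =>
    if (m : ℕ) < tOf I a then I m
    else if (m : ℕ) = tOf I a then a
    else if (m : ℕ) ≤ (s : ℕ) then I ⟨(m : ℕ) - 1, lt_of_le_of_lt (Nat.sub_le _ _) m.isLt⟩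
    else I m

lemma tOf_spec {I : Fin l → Fin k} (hI : StrictMono I) (a : Fin k) (m : Fin l) :
    (I m : ℕ) < (a : ℕ) ↔ (m : ℕ) < tOf I a := by
  constructor
  · intro h
    have hsub : Finset.Iic m ⊆ Finset.univ.filter fun m' => (I m' : ℕ) < (a : ℕ) := by
      intro m' hm'
      simp only [Finset.mem_Iic] at hm'
      simp only [Finset.mem_filter, Finset.mem_univ, true_and]
      have : (I m' : ℕ) ≤ (I m : ℕ) := hI.monotone hm'
      omega
    have := Finset.card_le_card hsub
    rw [Fin.card_Iic] at this
    unfold tOf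
    omega
  · intro h
    by_contra hc
    push_neg at hc
    have hsub : (Finset.univ.filter fun m' => (I m' : ℕ) < (a : ℕ)) ⊆ Finset.Iio m := by
      intro m' hm'
      simp only [Finset.mem_filter, Finset.mem_univ, true_and] at hm'
      simp only [Finset.mem_Iio]
      have hlt : (I m' : ℕ) < (I m : ℕ) := by omega
      exact hI.lt_iff_lt.mp (by rwa [Fin.lt_def])
    have := Finset.card_le_card hsub
    rw [Fin.card_Iio] at this
    unfold tOf at h
    omega

section good

variable {I : Fin l → Fin k} {s : Fin l} {a : Fin k}

lemma t_le (hI : StrictMono I) (hs1 : (a : ℕ) < I s) : tOf I a ≤ (s : ℕ) := by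
  by_contra h
  push_neg at h
  have := (tOf_spec hI a s).2 h
  omega

lemma a_ne (hI : StrictMono I) (hs1 : (a : ℕ) < I s)
    (hs2 : ∀ m, m < s → a ≠ I m) (m : Fin l) : (a : ℕ) ≠ (I m : ℕ) := by
  rcases lt_or_ge m s with h | h
  · exact fun he => hs2 m h (Fin.ext he)
  · have : (I s : ℕ) ≤ (I m : ℕ) := hI.monotone h
    omega

lemma a_lt_of_t_le (hI : StrictMono I) (hs1 : (a : ℕ) < I s)
    (hs2 : ∀ m, m < s → a ≠ I m) (m : Fin l) (hm : tOf I a ≤ (m : ℕ)) :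
    (a : ℕ) < (I m : ℕ) := by
  have h1 : ¬ (I m : ℕ) < (a : ℕ) := fun h => by
    have := (tOf_spec hI a m).1 h; omega
  have := a_ne hI hs1 hs2 m
  omega

lemma nbr_lo (m : Fin l) (hm : (m : ℕ) < tOf I a) : nbr I s a m = I m := by
  unfold nbr; rw [if_pos hm]

lemma nbr_t (m : Fin l) (hm : (m : ℕ) = tOf I a) : nbr I s a m = a := by
  unfold nbr; rw [if_neg (by omega), if_pos hm]

lemma nbr_mid (m : Fin l) (h1 : tOf I a < (m : ℕ)) (h2 : (m : ℕ) ≤ (s : ℕ)) :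
    nbr I s a m = I ⟨(m : ℕ) - 1, lt_of_le_of_lt (Nat.sub_le _ _) m.isLt⟩ := by
  unfold nbr; rw [if_neg (by omega), if_neg (by omega), if_pos h2]

lemma nbr_hi (m : Fin l) (h1 : tOf I a ≤ (s : ℕ)) (h2 : (s : ℕ) < (m : ℕ)) :
    nbr I s a m = I m := by
  unfold nbr; rw [if_neg (by omega), if_neg (by omega), if_neg (by omega)]

lemma nbr_mono (hI : StrictMono I) (hs1 : (a : ℕ) < I s)
    (hs2 : ∀ m, m < s → a ≠ I m) : StrictMono (nbr I s a) := by
  intro m1 m2 hlt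
  have hlt' : (m1 : ℕ) < (m2 : ℕ) := hlt
  have htle : tOf I a ≤ (s : ℕ) := t_le hI hs1
  rw [Fin.lt_def]
  rcases Nat.lt_trichotomy (m1 : ℕ) (tOf I a) with h1 | h1 | h1
  · rcases Nat.lt_trichotomy (m2 : ℕ) (tOf I a) with h2 | h2 | h2
    · rw [nbr_lo m1 h1, nbr_lo m2 h2]
      exact hI hlt
    · rw [nbr_lo m1 h1, nbr_t m2 h2]
      have := (tOf_spec hI a m1).2 h1
      omega
    · rcases le_or_gt (m2 : ℕ) (s : ℕ) with h3 | h3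
      · rw [nbr_lo m1 h1, nbr_mid m2 h2 h3]
        exact hI (by rw [Fin.lt_def]; simp; omega)
      · rw [nbr_lo m1 h1, nbr_hi m2 htle h3]
        exact hI hlt
  · rcases Nat.lt_trichotomy (m2 : ℕ) (tOf I a) with h2 | h2 | h2
    · omega
    · omega
    · rcases le_or_gt (m2 : ℕ) (s : ℕ) with h3 | h3
      · rw [nbr_t m1 h1, nbr_mid m2 h2 h3]
        exact a_lt_of_t_le hI hs1 hs2 _ (by simp; omega)
      · rw [nbr_t m1 h1, nbr_hi m2 htle h3]
        exact a_lt_of_t_le hI hs1 hs2 _ (by omega)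
  · rcases le_or_gt (m1 : ℕ) (s : ℕ) with h3 | h3
    · rcases le_or_gt (m2 : ℕ) (s : ℕ) with h4 | h4
      · rw [nbr_mid m1 h1 h3, nbr_mid m2 (by omega) h4]
        exact hI (by rw [Fin.lt_def]; simp; omega)
      · rw [nbr_mid m1 h1 h3, nbr_hi m2 htle h4]
        exact hI (by rw [Fin.lt_def]; simp; omega)
    · rw [nbr_hi m1 htle h3, nbr_hi m2 htle (by omega)]
      exact hI hlt


lemma nbr_isNeighbour (hI : StrictMono I) (hs1 : (a : ℕ) < I s)
    (hs2 : ∀ m, m < s → a ≠ I m) : IsNeighbour I (nbr I s a) := by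
  have htle : tOf I a ≤ (s : ℕ) := t_le hI hs1
  have htl : tOf I a < l := lt_of_le_of_lt htle s.isLt
  refine ⟨⟨tOf I a, htl⟩, ?_, ?_, ?_⟩
  · intro m hm
    exact nbr_lo m hm
  · rw [nbr_t _ rfl, Fin.lt_def]
    exact a_lt_of_t_le hI hs1 hs2 _ (le_refl _)
  · intro m hm
    have hm' : tOf I a < (m : ℕ) := hm
    rcases le_or_gt (m : ℕ) (s : ℕ) with h | h
    · exact ⟨⟨(m : ℕ) - 1, lt_of_le_of_lt (Nat.sub_le _ _) m.isLt⟩,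
        by rw [Fin.le_def]; simp; omega, nbr_mid m hm' h⟩
    · exact ⟨m, by rw [Fin.le_def]; simp; omega, nbr_hi m htle h⟩

lemma exists_rep (hI : StrictMono I) {J : Fin l → Fin k}
    (hJ : StrictMono J) (hN : IsNeighbour I J) :
    ∃ (s : Fin l) (a : Fin k), ((a : ℕ) < I s ∧ ∀ m, m < s → a ≠ I m) ∧ J = nbr I s a := by
  classical
  obtain ⟨t, h1, h2, h3⟩ := hN
  choose r hr1 hr2 using h3
  -- r is strictly monotone where defined
  have hrmono : ∀ (m1 m2 : Fin l) (hm1 : t < m1) (hm2 : t < m2), m1 < m2 →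
      (r m1 hm1 : ℕ) < (r m2 hm2 : ℕ) := by
    intro m1 m2 hm1 hm2 h
    have : I (r m1 hm1) < I (r m2 hm2) := by
      rw [← hr2 m1 hm1, ← hr2 m2 hm2]; exact hJ h
    exact hI.lt_iff_lt.mp this
  -- upper bound: r m ≤ m
  have hub : ∀ (d : ℕ) (m : Fin l) (hm : t < m), l - 1 - (m : ℕ) = d →
      (r m hm : ℕ) ≤ (m : ℕ) := by
    intro d
    induction d with
    | zero =>
      intro m hm hd
      have := (r m hm).isLt
      have := m.isLt
      omega
    | succ d ih =>
      intro m hm hd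
      have hm1 : (m : ℕ) + 1 < l := by have := m.isLt; omega
      have hmm : t < (⟨(m : ℕ) + 1, hm1⟩ : Fin l) := by
        rw [Fin.lt_def] at hm ⊢; simp; omega
      have hlt := hrmono m ⟨(m : ℕ) + 1, hm1⟩ hm hmm (by rw [Fin.lt_def]; simp)
      have hle := ih ⟨(m : ℕ) + 1, hm1⟩ hmm (by simp; omega)
      simp at hle
      omega
  -- lower bound: m - 1 ≤ r m
  have hlb : ∀ (d : ℕ) (m : Fin l) (hm : t < m), (m : ℕ) = (t : ℕ) + 1 + d →
      (m : ℕ) - 1 ≤ (r m hm : ℕ) := by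
    intro d
    induction d with
    | zero =>
      intro m hm hd
      have := hr1 m hm
      rw [Fin.le_def] at this
      omega
    | succ d ih =>
      intro m hm hd
      have hm1 : (m : ℕ) - 1 < l := lt_of_le_of_lt (Nat.sub_le _ _) m.isLt
      have hmm : t < (⟨(m : ℕ) - 1, hm1⟩ : Fin l) := by
        rw [Fin.lt_def] at hm ⊢; simp; omega
      have hle := ih ⟨(m : ℕ) - 1, hm1⟩ hmm (by simp; omega)
      have hlt := hrmono ⟨(m : ℕ) - 1, hm1⟩ m hmm hm (by rw [Fin.lt_def]; simp; omega)
      simp at hle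
      omega
  -- least index above t where J agrees with I
  set P : ℕ → Prop := fun n => ∃ hn : n < l, t < (⟨n, hn⟩ : Fin l) ∧ J ⟨n, hn⟩ = I ⟨n, hn⟩
    with hP
  have : DecidablePred P := Classical.decPred _
  set m0 : ℕ := if h : ∃ n, P n then Nat.find h else l with hm0def
  have hm0t : (t : ℕ) < m0 := by
    rw [hm0def]
    split
    · rename_i h
      obtain ⟨hn, ht, _⟩ := Nat.find_spec h
      rw [Fin.lt_def] at ht
      simpa using ht
    · exact t.isLt
  have hm0l : m0 ≤ l := by
    rw [hm0def]
    split
    · rename_i h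
      obtain ⟨hn, _, _⟩ := Nat.find_spec h
      omega
    · exact le_refl l
  have hmin : ∀ m : Fin l, t < m → (m : ℕ) < m0 → J m ≠ I m := by
    intro m hm hlt heq
    have hPm : P (m : ℕ) := ⟨m.isLt, by simpa using hm, by simpa using heq⟩
    rw [hm0def] at hlt
    by_cases h : ∃ n, P n
    · rw [dif_pos h] at hlt
      exact Nat.find_min h hlt hPm
    · exact h ⟨(m : ℕ), hPm⟩
  have hup : ∀ (d : ℕ) (m : Fin l), (m : ℕ) = m0 + d → J m = I m := by
    intro d
    induction d with
    | zero =>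
      intro m hm
      by_cases h : ∃ n, P n
      · obtain ⟨hn, ht, heq⟩ := Nat.find_spec h
        have : m = ⟨Nat.find h, hn⟩ := by
          apply Fin.ext; simp; rw [hm, hm0def, dif_pos h]; omega
        rw [this]; exact heq
      · exfalso
        have := m.isLt
        rw [hm0def, dif_neg h] at hm
        omega
    | succ d ih =>
      intro m hm
      have hm1 : (m : ℕ) - 1 < l := lt_of_le_of_lt (Nat.sub_le _ _) m.isLt
      set m' : Fin l := ⟨(m : ℕ) - 1, hm1⟩ with hm'
      have hprev : J m' = I m' := ih m' (by simp [hm']; omega)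
      have htm' : t < m' := by rw [Fin.lt_def]; simp [hm']; omega
      have htm : t < m := by rw [Fin.lt_def]; omega
      have hrm' : r m' htm' = m' := by
        apply hI.injective
        rw [← hr2 m' htm']
        exact hprev
      have hlt := hrmono m' m htm' htm (by rw [Fin.lt_def]; simp [hm']; omega)
      have hle := hub (l - 1 - (m : ℕ)) m htm rfl
      have : (r m htm : ℕ) = (m : ℕ) := by
        rw [hrm'] at hlt
        simp [hm'] at hlt
        omega
      have heq : r m htm = m := Fin.ext this
      rw [hr2 m htm, heq]
  have hmid : ∀ (m : Fin l) (hm : t < m), (m : ℕ) < m0 →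
      J m = I ⟨(m : ℕ) - 1, lt_of_le_of_lt (Nat.sub_le _ _) m.isLt⟩ := by
    intro m hm hlt
    have hub' := hub (l - 1 - (m : ℕ)) m hm rfl
    have hlb' := hlb ((m : ℕ) - (t : ℕ) - 1) m hm (by rw [Fin.lt_def] at hm; omega)
    have hne : (r m hm : ℕ) ≠ (m : ℕ) := by
      intro he
      exact hmin m hm hlt (by rw [hr2 m hm]; congr 1; exact Fin.ext he)
    rw [hr2 m hm]
    congr 1
    apply Fin.ext
    simp
    omega
  -- define s and a
  have hl1 : 1 ≤ l := by have := t.isLt; omega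
  set s : Fin l := ⟨m0 - 1, by omega⟩ with hs
  set a : Fin k := J t with ha
  have hts : (t : ℕ) ≤ (s : ℕ) := by simp [hs]; omega
  have halt : (a : ℕ) < (I t : ℕ) := by rw [ha]; exact h2
  have hItIs : (I t : ℕ) ≤ (I s : ℕ) := hI.monotone (by rw [Fin.le_def]; exact hts)
  have hs1 : (a : ℕ) < I s := by omega
  have hs2 : ∀ m, m < s → a ≠ I m := by
    intro m hm he
    rcases lt_or_ge m t with h | h
    · have : J m < J t := hJ h
      rw [h1 m h] at this
      rw [Fin.lt_def] at this
      rw [ha] at he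
      have : (I m : ℕ) < (J t : ℕ) := this
      omega
    · have : (I t : ℕ) ≤ (I m : ℕ) := hI.monotone h
      have : (a : ℕ) = (I m : ℕ) := congrArg Fin.val he
      omega
  refine ⟨s, a, ⟨hs1, hs2⟩, ?_⟩
  -- tOf I a = t
  have hval : ∀ m : Fin l, ((I m : ℕ) < (a : ℕ) ↔ (m : ℕ) < (t : ℕ)) := by
    intro m
    constructor
    · intro h
      by_contra hc
      push_neg at hc
      have : (I t : ℕ) ≤ (I m : ℕ) := hI.monotone (by rw [Fin.le_def]; exact hc)
      omega
    · intro h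
      have := hJ (show m < t by rwa [Fin.lt_def])
      rw [h1 m (by rwa [Fin.lt_def])] at this
      rw [Fin.lt_def] at this
      rw [ha]
      exact this
  have htOf : tOf I a = (t : ℕ) := by
    rcases Nat.lt_trichotomy (tOf I a) (t : ℕ) with h | h | h
    · exfalso
      set m : Fin l := ⟨tOf I a, lt_trans h t.isLt⟩ with hm
      have h1' : (I m : ℕ) < (a : ℕ) := (hval m).2 (by simp [hm]; omega)
      have h2' := (tOf_spec hI a m).1 h1'
      simp [hm] at h2'
    · exact h
    · exfalso
      have := (tOf_spec hI a t).2 h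
      have := (hval t).1 this
      omega
  funext m
  rcases Nat.lt_trichotomy (m : ℕ) (t : ℕ) with h | h | h
  · rw [nbr_lo m (by omega)]
    exact h1 m (by rwa [Fin.lt_def])
  · rw [nbr_t m (by omega)]
    have : m = t := Fin.ext h
    rw [this, ha]
  · rcases le_or_gt (m : ℕ) (s : ℕ) with h4 | h4
    · rw [nbr_mid m (by omega) h4]
      exact hmid m (by rwa [Fin.lt_def]) (by simp [hs] at h4; omega)
    · rw [nbr_hi m (by omega) h4]
      exact hup ((m : ℕ) - m0) m (by simp [hs] at h4; omega)

lemma nbr_inj (hI : StrictMono I) {s s' : Fin l} {a a' : Fin k}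
    (hs1 : (a : ℕ) < I s) (hs2 : ∀ m, m < s → a ≠ I m)
    (hs1' : (a' : ℕ) < I s') (hs2' : ∀ m, m < s' → a' ≠ I m)
    (heq : nbr I s a = nbr I s' a') : s = s' ∧ a = a' := by
  have hts : tOf I a ≤ (s : ℕ) := t_le hI hs1
  have hts' : tOf I a' ≤ (s' : ℕ) := t_le hI hs1'
  -- first t = t'
  have htt : tOf I a = tOf I a' := by
    rcases Nat.lt_trichotomy (tOf I a) (tOf I a') with h | h | h
    · exfalso
      have htl : tOf I a < l := lt_of_le_of_lt hts s.isLt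
      set m : Fin l := ⟨tOf I a, htl⟩ with hm
      have e1 : nbr I s a m = a := nbr_t m (by simp [hm])
      have e2 : nbr I s' a' m = I m := nbr_lo m (by simp [hm]; omega)
      have e3 : (a : ℕ) < (I m : ℕ) := a_lt_of_t_le hI hs1 hs2 m (by simp [hm])
      rw [heq, e2] at e1
      rw [e1] at e3
      omega
    · exact h
    · exfalso
      have htl : tOf I a' < l := lt_of_le_of_lt hts' s'.isLt
      set m : Fin l := ⟨tOf I a', htl⟩ with hm
      have e1 : nbr I s' a' m = a' := nbr_t m (by simp [hm])
      have e2 : nbr I s a m = I m := nbr_lo m (by simp [hm]; omega)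
      have e3 : (a' : ℕ) < (I m : ℕ) := a_lt_of_t_le hI hs1' hs2' m (by simp [hm])
      rw [← heq, e2] at e1
      rw [e1] at e3
      omega
  have htl : tOf I a < l := lt_of_le_of_lt hts s.isLt
  have haa : a = a' := by
    set m : Fin l := ⟨tOf I a, htl⟩ with hm
    have e1 : nbr I s a m = a := nbr_t m (by simp [hm])
    have e2 : nbr I s' a' m = a' := nbr_t m (by simp [hm]; omega)
    rw [heq, e2] at e1
    exact e1.symm
  subst haa
  refine ⟨?_, rfl⟩
  -- now s = s'
  have hss : ∀ (u u' : Fin l) (b b' : Fin k), (b : ℕ) < I u → (b' : ℕ) < I u' →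
      tOf I b = tOf I b' → nbr I u b = nbr I u' b' → (u : ℕ) ≤ (u' : ℕ) → u = u' := by
    intro u u' b b' hb hb' htb hequ hle
    apply Fin.ext
    by_contra hne
    have hlt : (u : ℕ) < (u' : ℕ) := by omega
    have htu : tOf I b ≤ (u : ℕ) := t_le hI hb
    have e1 : nbr I u b u' = I u' := nbr_hi u' htu hlt
    have e2 : nbr I u' b' u' = I ⟨(u' : ℕ) - 1, lt_of_le_of_lt (Nat.sub_le _ _) u'.isLt⟩ :=
      nbr_mid u' (by omega) (le_refl _)
    rw [hequ, e2] at e1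
    have hval := congrArg Fin.val (hI.injective e1)
    simp at hval
    omega
  rcases le_or_gt (s : ℕ) (s' : ℕ) with h | h
  · exact hss s s' a a hs1 hs1' rfl heq h
  · exact (hss s' s a a hs1' hs1 rfl heq.symm (le_of_lt h)).symm


end good

end CardNbrsAux

open CardNbrsAux in
/-- The counting part of Lemma 4.6 of the paper: the number of strictly increasing
`I`-neighbours `J` of a strictly increasing map `I : Fin l → Fin k` equals
`∑ t, (I t - t)` (which, in the 1-based notation of the paper, is
`∑_{r=1}^{l} (i_r - i_{r-1} - 1)(l - r + 1) = ∑_{r=1}^{l} i_r - l(l+1)/2 = |I|`). -/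
theorem card_neighbours
    (k l : ℕ) (hl : 1 ≤ l) (hlk : l ≤ k)
    (I : Fin l → Fin k) (hI : StrictMono I) :
    {J : Fin l → Fin k | StrictMono J ∧ IsNeighbour I J}.ncard
      = ∑ t : Fin l, ((I t : ℕ) - (t : ℕ)) := by
  classical
  set A : Fin l → Finset (Fin k) :=
    fun s => Finset.univ.filter fun a => (a : ℕ) < (I s : ℕ) ∧ ∀ m, m < s → a ≠ I m with hA
  have hmemA : ∀ (s : Fin l) (a : Fin k),
      a ∈ A s ↔ ((a : ℕ) < (I s : ℕ) ∧ ∀ m, m < s → a ≠ I m) := by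
    intro s a
    simp [hA]
  set S : Finset ((_ : Fin l) × Fin k) := Finset.univ.sigma A with hS
  have himage : {J : Fin l → Fin k | StrictMono J ∧ IsNeighbour I J}
      = ↑(S.image fun p => nbr I p.1 p.2) := by
    ext J
    simp only [Set.mem_setOf_eq, Finset.coe_image, Set.mem_image, Finset.mem_coe]
    constructor
    · rintro ⟨hJ, hN⟩
      obtain ⟨s, a, ⟨hs1, hs2⟩, rfl⟩ := exists_rep hI hJ hN
      exact ⟨⟨s, a⟩, by simp [hS, hmemA]; exact ⟨hs1, hs2⟩, rfl⟩
    · rintro ⟨⟨s, a⟩, hmem, rfl⟩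
      rw [hS, Finset.mem_sigma] at hmem
      obtain ⟨hs1, hs2⟩ := (hmemA s a).1 hmem.2
      exact ⟨nbr_mono hI hs1 hs2, nbr_isNeighbour hI hs1 hs2⟩
  rw [himage, Set.ncard_coe_finset]
  rw [Finset.card_image_of_injOn]
  · rw [hS, Finset.card_sigma]
    apply Finset.sum_congr rfl
    intro s _
    have hAeq : A s = Finset.Iio (I s) \ (Finset.Iio s).image I := by
      ext a
      rw [hmemA, Finset.mem_sdiff, Finset.mem_Iio, Finset.mem_image]
      constructor
      · rintro ⟨h1, h2⟩
        refine ⟨by rw [Fin.lt_def]; exact h1, ?_⟩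
        rintro ⟨m, hm, rfl⟩
        exact h2 m (Finset.mem_Iio.1 hm) rfl
      · rintro ⟨h1, h2⟩
        refine ⟨by rw [Fin.lt_def] at h1; exact h1, ?_⟩
        intro m hm he
        exact h2 ⟨m, Finset.mem_Iio.2 hm, he.symm⟩
    rw [hAeq, Finset.card_sdiff_of_subset, Fin.card_Iio,
      Finset.card_image_of_injOn (Set.InjOn.mono (Set.subset_univ _) hI.injective.injOn),
      Fin.card_Iio]
    · intro a ha
      rw [Finset.mem_image] at ha
      obtain ⟨m, hm, rfl⟩ := ha
      rw [Finset.mem_Iio] at hm ⊢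
      exact hI hm
  · intro p hp q hq heq
    rw [Finset.mem_coe, hS, Finset.mem_sigma] at hp hq
    obtain ⟨hp1, hp2⟩ := (hmemA p.1 p.2).1 hp.2
    obtain ⟨hq1, hq2⟩ := (hmemA q.1 q.2).1 hq.2
    obtain ⟨h1, h2⟩ := nbr_inj hI hp1 hp2 hq1 hq2 heq
    exact Sigma.ext h1 (by simp [h2])
end

section
/- Let x : Fin c → V and y : Fin (m+1) → V be families of vectors such that the combined family consisting of all x(i) and all y(j) is linearly independent, and let w ∈ V. Suppose that for every j ∈ Fin (m+1), the vector w lies in the span of the set {x(i) : i ∈ Fin c} ∪ {y(j') : j' ∈ Fin (m+1), j' ≠ j}. Then w lies in the span of {x(i) : i ∈ Fin c}. -/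
/-! Spans of subfamilies of a linearly independent family intersect as their index sets do,
and the index sets `{Sum.inr j}ᶜ` intersect in `range Sum.inl`. -/

open Submodule Set

theorem LinearIndependent.iInf_span_image {ι κ R M : Type*} [Ring R] [AddCommGroup M]
    [Module R M] [Nonempty κ] {v : ι → M} (hv : LinearIndependent R v) (s : κ → Set ι) :
    ⨅ k, span R (v '' s k) = span R (v '' ⋂ k, s k) := by
  simp only [Finsupp.span_image_eq_map_linearCombination, Finsupp.supported_iInter]
  exact (Submodule.map_iInf _ hv).symm

theorem Sum.elim_image_compl_singleton_inr {α β γ : Type*} (f : α → γ) (g : β → γ) (b : β) :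
    Sum.elim f g '' {Sum.inr b}ᶜ = range f ∪ g '' {b' | b' ≠ b} := by
  ext z
  simp

/-- If the combined family of the `x i` and the `y j` is linearly independent, and `w` lies
in the span of all the `x i` together with all the `y j'` for `j' ≠ j`, for every `j`, then
`w` lies in the span of the `x i` alone. -/
theorem mem_span_of_mem_span_erase
    {F V : Type*} [Field F] [AddCommGroup V] [Module F V]
    (c m : ℕ) (x : Fin c → V) (y : Fin (m + 1) → V)
    (hind : LinearIndependent F (Sum.elim x y))
    (w : V)
    (hspan : ∀ j : Fin (m + 1),
      w ∈ Submodule.span F (Set.range x ∪ y '' {j' : Fin (m + 1) | j' ≠ j})) :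
    w ∈ Submodule.span F (Set.range x) := by
  have hw : w ∈ ⨅ j, span F (Sum.elim x y '' {Sum.inr j}ᶜ) := by
    simpa only [mem_iInf, Sum.elim_image_compl_singleton_inr] using hspan
  have hinter : ⋂ j : Fin (m + 1), ({Sum.inr j}ᶜ : Set (Fin c ⊕ Fin (m + 1))) = range Sum.inl := by
    rw [← compl_iUnion, iUnion_singleton_eq_range, compl_range_inr]
  rwa [hind.iInf_span_image, hinter, ← range_comp, Sum.elim_comp_inl] at hw
end

section
/- Assume d_I(w) ≠ 0. Let t : Fin l and let s : Fin k satisfy I(m) < s for all m < t, and s < I(t). Assume that d_J(w) = 0 for every strictly increasing map J : Fin l → Fin k such that J(m) = I(m) for all m < t, J(t) = s, and for every m > t there exists r ≥ t with J(m) = I(r). Then the row w(s, ·) of w lies in the ℂ-linear span of the rows w(I(m), ·) with m < t. -/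
/-- From the proof of Lemma 4.6 of the paper: if `d_I(w) ≠ 0`, if `I m < s < I t` for all
`m < t`, and if `d_J(w) = 0` for every strictly increasing `J` agreeing with `I` before `t`,
with `J t = s`, and taking values `I r` with `r ≥ t` after `t`, then the row `w s` lies in
the span of the rows `w (I m)` for `m < t`. -/
theorem row_mem_span_of_minors_vanish
    (k l : ℕ) (hl : 1 ≤ l) (hlk : l ≤ k)
    (w : Matrix (Fin k) (Fin l) ℂ) (I : Fin l → Fin k) (hI : StrictMono I)
    (hdI : minor w I ≠ 0)
    (t : Fin l) (s : Fin k)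
    (hs1 : ∀ m : Fin l, m < t → I m < s) (hs2 : s < I t)
    (hJ : ∀ J : Fin l → Fin k, StrictMono J →
        (∀ m : Fin l, m < t → J m = I m) → J t = s →
        (∀ m : Fin l, t < m → ∃ r : Fin l, t ≤ r ∧ J m = I r) →
        minor w J = 0) :
    w s ∈ Submodule.span ℂ ((fun m : Fin l => w (I m)) '' {m : Fin l | m < t}) := by
  classical
  set M : Matrix (Fin l) (Fin l) ℂ := w.submatrix I id with hMdef
  have hMdet : M.det ≠ 0 := hdI
  set c : Fin l → ℂ := Matrix.vecMul (w s) M⁻¹ with hcdef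
  have hws : w s = ∑ m, c m • M m := by
    have h1 : Matrix.vecMul c M = w s := by
      rw [hcdef, Matrix.vecMul_vecMul, Matrix.nonsing_inv_mul M (isUnit_iff_ne_zero.mpr hMdet), Matrix.vecMul_one]
    funext j
    rw [← h1]
    simp [Matrix.vecMul, dotProduct, Finset.sum_apply]
  -- The key claim: c r = 0 for all r ≥ t
  have hzero : ∀ r : Fin l, t ≤ r → c r = 0 := by
    intro r hr
    have hrv : (t : ℕ) ≤ (r : ℕ) := hr
    -- the permutation sending t ↦ r, shifting (t, r] down by one, identity elsewhere
    set g : Fin l → Fin l := fun m =>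
      if m = t then r
      else if t < m ∧ m ≤ r then ⟨(m : ℕ) - 1, Nat.lt_of_le_of_lt (Nat.sub_le _ _) m.isLt⟩
      else m with hgdef
    have hchar : ∀ m : Fin l,
        ((m : ℕ) = (t : ℕ) ∧ (g m : ℕ) = (r : ℕ)) ∨
        ((m : ℕ) ≠ (t : ℕ) ∧ (t : ℕ) < (m : ℕ) ∧ (m : ℕ) ≤ (r : ℕ) ∧
          (g m : ℕ) = (m : ℕ) - 1) ∨
        ((m : ℕ) ≠ (t : ℕ) ∧ ¬((t : ℕ) < (m : ℕ) ∧ (m : ℕ) ≤ (r : ℕ)) ∧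
          (g m : ℕ) = (m : ℕ)) := by
      intro m
      simp only [hgdef]
      split_ifs with h1 h2
      · exact Or.inl ⟨by rw [h1], rfl⟩
      · exact Or.inr (Or.inl ⟨fun h => h1 (Fin.ext h), h2.1, h2.2, rfl⟩)
      · refine Or.inr (Or.inr ⟨fun h => h1 (Fin.ext h), fun h => h2 ⟨h.1, h.2⟩, rfl⟩)
    have hgt : g t = r := by simp [hgdef]
    have hinj : Function.Injective g := by
      intro a b hab
      have h : (g a : ℕ) = (g b : ℕ) := congrArg Fin.val hab
      have ha := hchar a
      have hb := hchar b
      exact Fin.ext (by omega)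
    have hbij : Function.Bijective g := Finite.injective_iff_bijective.mp hinj
    set σ : Equiv.Perm (Fin l) := Equiv.ofBijective g hbij with hσdef
    -- the strictly increasing map J
    set J : Fin l → Fin k := fun m => if m = t then s else I (g m) with hJdef
    have hJval : ∀ m : Fin l, m ≠ t → J m = I (g m) := by
      intro m hm; simp only [hJdef, if_neg hm]
    have hJt : J t = s := by simp [hJdef]
    have hJmono : StrictMono J := by
      intro a b hab
      have habv : (a : ℕ) < (b : ℕ) := hab
      have ha := hchar a
      have hb := hchar b
      by_cases hat : a = t <;> by_cases hbt : b = t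
      · exact absurd (hat.trans hbt.symm) (ne_of_lt hab)
      · -- a = t < b : J a = s, J b = I (g b) with t ≤ g b
        have hatv : (a : ℕ) = (t : ℕ) := congrArg Fin.val hat
        rw [hat, hJt, hJval b hbt]
        have hgb : (t : ℕ) ≤ (g b : ℕ) := by omega
        exact lt_of_lt_of_le hs2 (hI.monotone hgb)
      · -- a < b = t : J a = I a (g a = a), J b = s
        have hbtv : (b : ℕ) = (t : ℕ) := congrArg Fin.val hbt
        rw [hJval a hat, hbt, hJt]
        have hga : (g a : ℕ) = (a : ℕ) := by omega
        have : I (g a) = I a := by rw [Fin.ext hga]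
        rw [this]
        exact hs1 a (show (a:ℕ) < (t:ℕ) by omega)
      · rw [hJval a hat, hJval b hbt]
        have havt : (a : ℕ) ≠ (t : ℕ) := fun h => hat (Fin.ext h)
        have hbvt : (b : ℕ) ≠ (t : ℕ) := fun h => hbt (Fin.ext h)
        have : (g a : ℕ) < (g b : ℕ) := by omega
        exact hI this
    have hJ1 : ∀ m : Fin l, m < t → J m = I m := by
      intro m hm
      have hmv : (m : ℕ) < (t : ℕ) := hm
      rw [hJval m (ne_of_lt hm)]
      have := hchar m
      have hgm : (g m : ℕ) = (m : ℕ) := by omega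
      rw [Fin.ext hgm]
    have hJ3 : ∀ m : Fin l, t < m → ∃ r' : Fin l, t ≤ r' ∧ J m = I r' := by
      intro m hm
      have hmv : (t : ℕ) < (m : ℕ) := hm
      have := hchar m
      refine ⟨g m, by show (t : ℕ) ≤ (g m : ℕ); omega, hJval m (ne_of_gt hm)⟩
    have hJ0 : minor w J = 0 := hJ J hJmono hJ1 hJt hJ3
    -- rewrite the minor of J as an updated-row determinant
    set B : Matrix (Fin l) (Fin l) ℂ := M.submatrix g id with hBdef
    have hB : w.submatrix J id = B.updateRow t (w s) := by
      funext m j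
      by_cases hmt : m = t
      · subst hmt
        simp [hJdef, hBdef, Matrix.updateRow_self]
      · simp [hJdef, hBdef, hMdef, Matrix.updateRow_ne hmt, if_neg hmt]
    have hws' : w s = ∑ m, c (g m) • B m := by
      rw [hws]
      exact (Equiv.sum_comp σ (fun m => c m • M m)).symm
    have hdet : (B.updateRow t (w s)).det = c (g t) • B.det := by
      rw [hws']
      exact Matrix.det_updateRow_sum B t (fun m => c (g m))
    have hBdet : B.det = (Equiv.Perm.sign σ : ℂ) * M.det := Matrix.det_permute σ M
    have hBne : B.det ≠ 0 := by
      rw [hBdet]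
      refine mul_ne_zero ?_ hMdet
      rcases Int.units_eq_one_or (Equiv.Perm.sign σ) with h | h <;> simp [h]
    have h0 : c (g t) • B.det = 0 := by
      rw [← hdet, ← hB]
      exact hJ0
    rw [hgt] at h0
    rcases smul_eq_zero.mp h0 with h | h
    · exact h
    · exact absurd h hBne
  -- conclude
  rw [hws]
  refine Submodule.sum_mem _ fun m _ => ?_
  by_cases hm : m < t
  · exact Submodule.smul_mem _ _ (Submodule.subset_span ⟨m, hm, rfl⟩)
  · rw [hzero m (not_lt.1 hm), zero_smul]
    exact Submodule.zero_mem _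
end

section
/- For every L ∈ W, the image π(L) = fst(L) is an l-dimensional subspace of E₁; the resulting map π from W to the set of all l-dimensional subspaces of E₁ (the Grassmannian G(l,k)) is surjective; and for every strictly increasing map I : Fin l → Fin k there exists a bijection from the set {L ∈ W : π(L) ∈ V_I} to the product V_I × Matrix(Fin(n−k), Fin l, ℂ) whose first component is L ↦ π(L) (a set-theoretic trivialization of π over V_I with fibre the affine space of (n−k) × l complex matrices). -/
/-!
A subspace `L` of `E₁ × E₂` meeting `ker fst` trivially is the graph of a unique linear map
`fst L → E₂`, so `fst` preserves its dimension and `L ↦ (fst L, that map)` is a bijection onto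
pairs `(U, Hom(U, E₂))`. Over the chart `V_I`, the subspace `U` has a canonical basis, the one
whose `I`-coordinates are the standard basis of `ℂˡ`, and it identifies `Hom(U, E₂)` with the
`(n - k) × l` matrices.
-/

/-- The subspace of `Fin k → ℂ` consisting of vectors vanishing at all the coordinates
selected by `I : Fin l → Fin k`. -/
noncomputable def coordKer (k l : ℕ) (I : Fin l → Fin k) : Submodule ℂ (Fin k → ℂ) :=
  ⨅ r : Fin l, LinearMap.ker (LinearMap.proj (I r) : (Fin k → ℂ) →ₗ[ℂ] ℂ)

open Module

section Graph

variable {R E F : Type*} [Ring R] [AddCommGroup E] [Module R E] [AddCommGroup F] [Module R F]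

theorem Submodule.finrank_map_eq_of_inf_ker_eq_bot {f : E →ₗ[R] F} {p : Submodule R E}
    (h : p ⊓ LinearMap.ker f = ⊥) : finrank R (p.map f) = finrank R p := by
  rw [← LinearMap.range_domRestrict]
  exact (LinearEquiv.ofInjective _
    (LinearMap.injective_domRestrict_iff.mpr (disjoint_iff.mpr h))).finrank_eq.symm

theorem LinearPMap.graph_inf_ker_fst (f : E →ₗ.[R] F) :
    f.graph ⊓ LinearMap.ker (LinearMap.fst R E F) = ⊥ :=
  (Submodule.eq_bot_iff _).mpr fun x ⟨hx, hx1⟩ =>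
    Prod.ext hx1 (f.graph_fst_eq_zero_snd (x := x.1) hx hx1)

theorem Submodule.snd_eq_zero_of_inf_ker_fst_eq_bot {g : Submodule R (E × F)}
    (hg : g ⊓ LinearMap.ker (LinearMap.fst R E F) = ⊥) (x : E × F) (hx : x ∈ g)
    (hx1 : x.1 = 0) : x.2 = 0 :=
  congrArg Prod.snd ((Submodule.eq_bot_iff _).mp hg x ⟨hx, hx1⟩)

noncomputable def LinearPMap.graphEquiv :
    (E →ₗ.[R] F) ≃ {g : Submodule R (E × F) // g ⊓ LinearMap.ker (LinearMap.fst R E F) = ⊥} where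
  toFun f := ⟨f.graph, f.graph_inf_ker_fst⟩
  invFun g := g.1.toLinearPMap
  left_inv f := LinearPMap.eq_of_eq_graph <|
    Submodule.toLinearPMap_graph_eq _
      (Submodule.snd_eq_zero_of_inf_ker_fst_eq_bot f.graph_inf_ker_fst)
  right_inv g := Subtype.ext <|
    Submodule.toLinearPMap_graph_eq _ (Submodule.snd_eq_zero_of_inf_ker_fst_eq_bot g.2)

noncomputable def graphTrivialization (P : Submodule R E → Prop) (X : Type*)
    (φ : ∀ U : Submodule R E, P U → (U →ₗ[R] F) ≃ X) :
    {g : Submodule R (E × F) //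
        g ⊓ LinearMap.ker (LinearMap.fst R E F) = ⊥ ∧ P (g.map (LinearMap.fst R E F))} ≃
      {U : Submodule R E // P U} × X :=
  calc _ ≃ {g : {g : Submodule R (E × F) // g ⊓ LinearMap.ker (LinearMap.fst R E F) = ⊥} //
          P (g.1.map (LinearMap.fst R E F))} := (Equiv.subtypeSubtypeEquivSubtypeInter _ _).symm
    _ ≃ {f : E →ₗ.[R] F // P f.domain} :=
      Equiv.subtypeEquiv LinearPMap.graphEquiv.symm fun _ => Iff.rfl
    _ ≃ Σ U : {U : Submodule R E // P U}, (U.1 →ₗ[R] F) :=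
      { toFun f := ⟨⟨f.1.domain, f.2⟩, f.1.toFun⟩
        invFun p := ⟨⟨p.1.1, p.2⟩, p.1.2⟩
        left_inv _ := rfl
        right_inv _ := rfl }
    _ ≃ Σ _ : {U : Submodule R E // P U}, X := Equiv.sigmaCongrRight fun U => φ U.1 U.2
    _ ≃ _ := Equiv.sigmaEquivProd _ _

end Graph

theorem ker_funLeft_eq_coordKer (k l : ℕ) (I : Fin l → Fin k) :
    LinearMap.ker (LinearMap.funLeft ℂ ℂ I) = coordKer k l I := by
  ext x
  simp [coordKer, LinearMap.funLeft, Submodule.mem_iInf, funext_iff]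

noncomputable def coordBasis {k l : ℕ} (I : Fin l → Fin k) (U : Submodule ℂ (Fin k → ℂ))
    (hU : finrank ℂ U = l) (hUI : U ⊓ coordKer k l I = ⊥) : Basis (Fin l) ℂ U :=
  .ofEquivFun <| ((LinearMap.funLeft ℂ ℂ I).domRestrict U).linearEquivOfInjective
    (LinearMap.injective_domRestrict_iff.mpr <| disjoint_iff.mpr <| by
      rwa [ker_funLeft_eq_coordKer])
    (by rw [hU, finrank_fin_fun])

theorem grassmann_fibration_trivializes_general
    (n k l : ℕ) :
    (∀ L : Submodule ℂ ((Fin k → ℂ) × (Fin (n - k) → ℂ)),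
        Module.finrank ℂ L = l →
        L ⊓ LinearMap.ker (LinearMap.fst ℂ (Fin k → ℂ) (Fin (n - k) → ℂ)) = ⊥ →
        Module.finrank ℂ
          (L.map (LinearMap.fst ℂ (Fin k → ℂ) (Fin (n - k) → ℂ))) = l) ∧
    (∀ U : Submodule ℂ (Fin k → ℂ), Module.finrank ℂ U = l →
      ∃ L : Submodule ℂ ((Fin k → ℂ) × (Fin (n - k) → ℂ)),
        Module.finrank ℂ L = l ∧
        L ⊓ LinearMap.ker (LinearMap.fst ℂ (Fin k → ℂ) (Fin (n - k) → ℂ)) = ⊥ ∧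
        L.map (LinearMap.fst ℂ (Fin k → ℂ) (Fin (n - k) → ℂ)) = U) ∧
    (∀ I : Fin l → Fin k, StrictMono I →
      ∃ e : {L : Submodule ℂ ((Fin k → ℂ) × (Fin (n - k) → ℂ)) //
              (Module.finrank ℂ L = l ∧
                L ⊓ LinearMap.ker (LinearMap.fst ℂ (Fin k → ℂ) (Fin (n - k) → ℂ)) = ⊥) ∧
              (Module.finrank ℂ
                  (L.map (LinearMap.fst ℂ (Fin k → ℂ) (Fin (n - k) → ℂ))) = l ∧
                L.map (LinearMap.fst ℂ (Fin k → ℂ) (Fin (n - k) → ℂ)) ⊓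
                  coordKer k l I = ⊥)} ≃
            {U : Submodule ℂ (Fin k → ℂ) //
              Module.finrank ℂ U = l ∧ U ⊓ coordKer k l I = ⊥} ×
            Matrix (Fin (n - k)) (Fin l) ℂ,
        ∀ L, ((e L).1 : {U : Submodule ℂ (Fin k → ℂ) //
                Module.finrank ℂ U = l ∧ U ⊓ coordKer k l I = ⊥}).val =
          L.val.map (LinearMap.fst ℂ (Fin k → ℂ) (Fin (n - k) → ℂ))) := by
  have hdim {L : Submodule ℂ ((Fin k → ℂ) × (Fin (n - k) → ℂ))}
      (hker : L ⊓ LinearMap.ker (LinearMap.fst ℂ _ _) = ⊥) :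
      finrank ℂ L = finrank ℂ (L.map (LinearMap.fst ℂ _ _)) :=
    (Submodule.finrank_map_eq_of_inf_ker_eq_bot hker).symm
  refine ⟨fun L hL hker => (hdim hker).symm.trans hL, fun U hU => ?_, fun I _ => ?_⟩
  · let f : (Fin k → ℂ) →ₗ.[ℂ] (Fin (n - k) → ℂ) := ⟨U, 0⟩
    have hfst : f.graph.map (LinearMap.fst ℂ _ _) = U := f.graph_map_fst_eq_domain
    exact ⟨f.graph, by rw [hdim f.graph_inf_ker_fst, hfst, hU], f.graph_inf_ker_fst, hfst⟩
  · refine ⟨(Equiv.subtypeEquivRight fun L => ?_).trans (graphTrivialization _ _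
      fun U hU => (LinearMap.toMatrix (coordBasis I U hU.1 hU.2) (Pi.basisFun ℂ _)).toEquiv),
      fun L => rfl⟩
    exact ⟨fun ⟨⟨_, hker⟩, hU⟩ => ⟨hker, hU⟩,
      fun ⟨hker, hU⟩ => ⟨⟨(hdim hker).trans hU.1, hker⟩, hU⟩⟩

/-- Lemma 4.4 of the paper: with `W` the set of `l`-dimensional subspaces `L` of
`E₁ × E₂ = (Fin k → ℂ) × (Fin (n-k) → ℂ)` with `L ∩ ker fst = 0`, the assignment
`π(L) = fst(L)` lands in `l`-dimensional subspaces of `E₁`, is surjective onto the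
Grassmannian `G(l,k)` of all such subspaces, and over each chart
`V_I = {U : dim U = l, U ∩ coordKer I = 0}` it trivializes, with fibre the affine space of
`(n-k) × l` complex matrices. -/
theorem grassmann_fibration_trivializes
    (n k l : ℕ) (hl : 1 ≤ l) (hlk : l ≤ k) (hkn : k ≤ n) :
    (∀ L : Submodule ℂ ((Fin k → ℂ) × (Fin (n - k) → ℂ)),
        Module.finrank ℂ L = l →
        L ⊓ LinearMap.ker (LinearMap.fst ℂ (Fin k → ℂ) (Fin (n - k) → ℂ)) = ⊥ →
        Module.finrank ℂ
          (L.map (LinearMap.fst ℂ (Fin k → ℂ) (Fin (n - k) → ℂ))) = l) ∧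
    (∀ U : Submodule ℂ (Fin k → ℂ), Module.finrank ℂ U = l →
      ∃ L : Submodule ℂ ((Fin k → ℂ) × (Fin (n - k) → ℂ)),
        Module.finrank ℂ L = l ∧
        L ⊓ LinearMap.ker (LinearMap.fst ℂ (Fin k → ℂ) (Fin (n - k) → ℂ)) = ⊥ ∧
        L.map (LinearMap.fst ℂ (Fin k → ℂ) (Fin (n - k) → ℂ)) = U) ∧
    (∀ I : Fin l → Fin k, StrictMono I →
      ∃ e : {L : Submodule ℂ ((Fin k → ℂ) × (Fin (n - k) → ℂ)) //
              (Module.finrank ℂ L = l ∧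
                L ⊓ LinearMap.ker (LinearMap.fst ℂ (Fin k → ℂ) (Fin (n - k) → ℂ)) = ⊥) ∧
              (Module.finrank ℂ
                  (L.map (LinearMap.fst ℂ (Fin k → ℂ) (Fin (n - k) → ℂ))) = l ∧
                L.map (LinearMap.fst ℂ (Fin k → ℂ) (Fin (n - k) → ℂ)) ⊓
                  coordKer k l I = ⊥)} ≃
            {U : Submodule ℂ (Fin k → ℂ) //
              Module.finrank ℂ U = l ∧ U ⊓ coordKer k l I = ⊥} ×
            Matrix (Fin (n - k)) (Fin l) ℂ,
        ∀ L, ((e L).1 : {U : Submodule ℂ (Fin k → ℂ) //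
                Module.finrank ℂ U = l ∧ U ⊓ coordKer k l I = ⊥}).val =
          L.val.map (LinearMap.fst ℂ (Fin k → ℂ) (Fin (n - k) → ℂ))) :=
  grassmann_fibration_trivializes_general n k l
end
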